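/- arXiv:math/0409144 — 10 statements merged into one kernel-verified Lean document; each statement's English description precedes it below -/
import Mathlib

section
/- Let m₁, m₂, d ∈ ℕ and write states as x = (x₁, x₂) ∈ ℝ^{m₁} × ℝ^{m₂}. Let ψ : ℝ^{m₁}×ℝ^{m₂}×ℝ → ℝ, α : ℝ^{m₁}×ℝ^{m₂}×ℝ → ℝᵈ and Ψ : ℝ^{m₁}×ℝ^{m₂}×ℝ → ℝᵈ be continuously differentiable, let β : ℝ^{m₁}×ℝ^{m₂}×ℝ → ℝ^{d×m₂} be continuous, let f₁, g₁ : ℝ^{m₁}×ℝ^{m₂} → ℝ^{m₁}, f₂ : ℝ^{m₁}×ℝ^{m₂}×ℝᵈ → ℝ^{m₂}, g₂ : ℝ^{m₁}×ℝ^{m₂} → ℝ^{m₂}, let Γ be a real d×d matrix, let φ : ℝ → ℝ, and let θ ∈ ℝᵈ. Let x(t) = (x₁(t), x₂(t)) be differentiable with x₁'(t) = f₁(x(t)) + u(t)g₁(x(t)) and x₂'(t) = f₂(x(t), θ) + u(t)g₂(x(t)) for a function u : ℝ → ℝ. Define θ̂_P(x,t) := ψ(x,t)·α(x,t) − Ψ(x,t),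 let θ̂_I : ℝ → ℝᵈ be differentiable, and set θ̂(t) := Γ(θ̂_P(x(t),t) + θ̂_I(t)). Assume: (i) the structural condition D_{x₂}Ψ(x,t) − ψ(x,t)·D_{x₂}α(x,t) = β(x,t) holds for all (x,t), where D_{x₂} denotes the partial Fréchet derivative in the x₂-variable; and (ii) θ̂_I'(t) = φ(ψ)α + ∂Ψ/∂t − ψ·∂α/∂t − (ψ·D_{x₁}α[f₁] − D_{x₁}Ψ[f₁]) − (ψ·D_{x₁}α[g₁] − D_{x₁}Ψ[g₁])·u(t) + β·(f₂(x(t), θ̂(t)) + g₂(x(t))u(t)), where all functions ψ, α, Ψ, β, f₁, g₁ and their derivatives are evaluated at (x(t), t) (respectively x(t)). Then t ↦ θ̂(t) is differentiable and θ̂'(t) = Γ( (ψ̇(t) + φ(ψ(x(t),t)))·α(x(t),t) − β(x(t),t)·(f₂(x(t), θ) − f₂(x(t), θ̂(t))) ), where ψ̇(t) := d/dt ψ(x(t),t). -/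
open Matrix

/-- the finite-form adaptation algorithm
`θ̂ = Γ(θ̂_P + θ̂_I)` with `θ̂_P = ψ·α − Ψ` and the stated integral part
generates, along every trajectory of the plant
`ẋ₁ = f₁(x) + g₁(x)u`, `ẋ₂ = f₂(x,θ) + g₂(x)u`, the differential law
`θ̂' = Γ((ψ̇ + φ(ψ))·α − β·(f₂(x,θ) − f₂(x,θ̂)))`. -/
theorem statement1 {m₁ m₂ d : ℕ}
    (ψ : (Fin m₁ → ℝ) × (Fin m₂ → ℝ) × ℝ → ℝ)
    (α Ψ : (Fin m₁ → ℝ) × (Fin m₂ → ℝ) × ℝ → (Fin d → ℝ))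
    (β : (Fin m₁ → ℝ) × (Fin m₂ → ℝ) × ℝ → Matrix (Fin d) (Fin m₂) ℝ)
    (f₁ g₁ : (Fin m₁ → ℝ) × (Fin m₂ → ℝ) → (Fin m₁ → ℝ))
    (f₂ : (Fin m₁ → ℝ) × (Fin m₂ → ℝ) → (Fin d → ℝ) → (Fin m₂ → ℝ))
    (g₂ : (Fin m₁ → ℝ) × (Fin m₂ → ℝ) → (Fin m₂ → ℝ))
    (Γ : Matrix (Fin d) (Fin d) ℝ) (φ : ℝ → ℝ) (θ : Fin d → ℝ)
    (u : ℝ → ℝ) (x₁ : ℝ → (Fin m₁ → ℝ)) (x₂ : ℝ → (Fin m₂ → ℝ))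
    (hψ : ContDiff ℝ 1 ψ) (hα : ContDiff ℝ 1 α) (hΨ : ContDiff ℝ 1 Ψ)
    (hβ : Continuous β)
    -- the plant dynamics
    (hx₁ : ∀ t : ℝ, HasDerivAt x₁ (f₁ (x₁ t, x₂ t) + u t • g₁ (x₁ t, x₂ t)) t)
    (hx₂ : ∀ t : ℝ, HasDerivAt x₂ (f₂ (x₁ t, x₂ t) θ + u t • g₂ (x₁ t, x₂ t)) t)
    -- the proportional part, the integral part and the estimate
    (θP : (Fin m₁ → ℝ) × (Fin m₂ → ℝ) × ℝ → (Fin d → ℝ))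
    (hθP : ∀ p, θP p = ψ p • α p - Ψ p)
    (θI : ℝ → (Fin d → ℝ))
    (θhat : ℝ → (Fin d → ℝ))
    (hθhat : ∀ t : ℝ, θhat t = Γ *ᵥ (θP (x₁ t, x₂ t, t) + θI t))
    -- (i) the structural condition of Assumption 3:
    --     D_{x₂}Ψ(x,t) − ψ(x,t)·D_{x₂}α(x,t) = β(x,t)
    (hstruct : ∀ (p : (Fin m₁ → ℝ) × (Fin m₂ → ℝ) × ℝ) (v : Fin m₂ → ℝ),
      fderiv ℝ Ψ p (0, v, 0) - ψ p • fderiv ℝ α p (0, v, 0) = β p *ᵥ v)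
    -- (ii) the integral part of the algorithm
    (hθI : ∀ t : ℝ, HasDerivAt θI
      (φ (ψ (x₁ t, x₂ t, t)) • α (x₁ t, x₂ t, t)
        + fderiv ℝ Ψ (x₁ t, x₂ t, t) (0, 0, 1)
        - ψ (x₁ t, x₂ t, t) • fderiv ℝ α (x₁ t, x₂ t, t) (0, 0, 1)
        - (ψ (x₁ t, x₂ t, t) • fderiv ℝ α (x₁ t, x₂ t, t) (f₁ (x₁ t, x₂ t), 0, 0)
            - fderiv ℝ Ψ (x₁ t, x₂ t, t) (f₁ (x₁ t, x₂ t), 0, 0))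
        - u t • (ψ (x₁ t, x₂ t, t) • fderiv ℝ α (x₁ t, x₂ t, t) (g₁ (x₁ t, x₂ t), 0, 0)
            - fderiv ℝ Ψ (x₁ t, x₂ t, t) (g₁ (x₁ t, x₂ t), 0, 0))
        + β (x₁ t, x₂ t, t) *ᵥ (f₂ (x₁ t, x₂ t) (θhat t) + u t • g₂ (x₁ t, x₂ t))) t) :
    ∀ t : ℝ, HasDerivAt θhat
      (Γ *ᵥ ((deriv (fun s => ψ (x₁ s, x₂ s, s)) t + φ (ψ (x₁ t, x₂ t, t)))
              • α (x₁ t, x₂ t, t)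
            - β (x₁ t, x₂ t, t) *ᵥ (f₂ (x₁ t, x₂ t) θ - f₂ (x₁ t, x₂ t) (θhat t)))) t := by
  intro t
  have hX : HasDerivAt (fun s => (x₁ s, x₂ s, s))
      ((f₁ (x₁ t, x₂ t) + u t • g₁ (x₁ t, x₂ t),
        f₂ (x₁ t, x₂ t) θ + u t • g₂ (x₁ t, x₂ t), 1) :
        (Fin m₁ → ℝ) × (Fin m₂ → ℝ) × ℝ) t :=
    (hx₁ t).prodMk ((hx₂ t).prodMk (hasDerivAt_id t))
  set p : (Fin m₁ → ℝ) × (Fin m₂ → ℝ) × ℝ := (x₁ t, x₂ t, t) with hp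
  set V : (Fin m₁ → ℝ) × (Fin m₂ → ℝ) × ℝ :=
    (f₁ (x₁ t, x₂ t) + u t • g₁ (x₁ t, x₂ t),
     f₂ (x₁ t, x₂ t) θ + u t • g₂ (x₁ t, x₂ t), 1) with hV
  have hψd : HasDerivAt (fun s => ψ (x₁ s, x₂ s, s)) (fderiv ℝ ψ p V) t :=
    ((hψ.differentiable one_ne_zero p).hasFDerivAt).comp_hasDerivAt t hX
  have hαd : HasDerivAt (fun s => α (x₁ s, x₂ s, s)) (fderiv ℝ α p V) t :=
    ((hα.differentiable one_ne_zero p).hasFDerivAt).comp_hasDerivAt t hX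
  have hΨd : HasDerivAt (fun s => Ψ (x₁ s, x₂ s, s)) (fderiv ℝ Ψ p V) t :=
    ((hΨ.differentiable one_ne_zero p).hasFDerivAt).comp_hasDerivAt t hX
  have hψdot : deriv (fun s => ψ (x₁ s, x₂ s, s)) t = fderiv ℝ ψ p V := hψd.deriv
  have hsum : HasDerivAt (fun s => θP (x₁ s, x₂ s, s) + θI s)
      ((fderiv ℝ ψ p V • α p + ψ p • fderiv ℝ α p V - fderiv ℝ Ψ p V)
        + (φ (ψ p) • α p
        + fderiv ℝ Ψ p (0, 0, 1)
        - ψ p • fderiv ℝ α p (0, 0, 1)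
        - (ψ p • fderiv ℝ α p (f₁ (x₁ t, x₂ t), 0, 0)
            - fderiv ℝ Ψ p (f₁ (x₁ t, x₂ t), 0, 0))
        - u t • (ψ p • fderiv ℝ α p (g₁ (x₁ t, x₂ t), 0, 0)
            - fderiv ℝ Ψ p (g₁ (x₁ t, x₂ t), 0, 0))
        + β p *ᵥ (f₂ (x₁ t, x₂ t) (θhat t) + u t • g₂ (x₁ t, x₂ t)))) t := by
    have h1 : HasDerivAt (fun s => θP (x₁ s, x₂ s, s))
        (fderiv ℝ ψ p V • α p + ψ p • fderiv ℝ α p V - fderiv ℝ Ψ p V) t := by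
      have h0 : HasDerivAt (fun s => ψ (x₁ s, x₂ s, s) • α (x₁ s, x₂ s, s) - Ψ (x₁ s, x₂ s, s)) _ t := (hψd.smul hαd).sub hΨd
      have he : (fun s => ψ (x₁ s, x₂ s, s) • α (x₁ s, x₂ s, s) - Ψ (x₁ s, x₂ s, s))
          = fun s => θP (x₁ s, x₂ s, s) := by
        funext s; rw [hθP]
      rw [he] at h0
      convert h0 using 1
      abel
    exact h1.add (hθI t)
  set L : (Fin d → ℝ) →L[ℝ] (Fin d → ℝ) :=
    LinearMap.toContinuousLinearMap (Matrix.mulVecLin Γ) with hL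
  have hLapp : ∀ v, L v = Γ *ᵥ v := fun v => rfl
  have hfinal := L.hasFDerivAt.comp_hasDerivAt t hsum
  have hfun : (fun s => L (θP (x₁ s, x₂ s, s) + θI s)) = θhat := by
    funext s
    rw [hLapp, hθhat s]
  simp only [Function.comp_def] at hfinal
  rw [hfun] at hfinal
  have hdec : V = (f₁ (x₁ t, x₂ t), 0, 0) + u t • ((g₁ (x₁ t, x₂ t), 0, 0) :
      (Fin m₁ → ℝ) × (Fin m₂ → ℝ) × ℝ)
      + (0, f₂ (x₁ t, x₂ t) θ + u t • g₂ (x₁ t, x₂ t), 0) + (0, 0, 1) := by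
    simp [hV, Prod.ext_iff]
  have happα : fderiv ℝ α p V
      = fderiv ℝ α p (f₁ (x₁ t, x₂ t), 0, 0)
        + u t • fderiv ℝ α p (g₁ (x₁ t, x₂ t), 0, 0)
        + fderiv ℝ α p (0, f₂ (x₁ t, x₂ t) θ + u t • g₂ (x₁ t, x₂ t), 0)
        + fderiv ℝ α p (0, 0, 1) := by
    rw [hdec, map_add, map_add, map_add, (fderiv ℝ α p).map_smul]
  have happΨ : fderiv ℝ Ψ p V
      = fderiv ℝ Ψ p (f₁ (x₁ t, x₂ t), 0, 0)
        + u t • fderiv ℝ Ψ p (g₁ (x₁ t, x₂ t), 0, 0)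
        + fderiv ℝ Ψ p (0, f₂ (x₁ t, x₂ t) θ + u t • g₂ (x₁ t, x₂ t), 0)
        + fderiv ℝ Ψ p (0, 0, 1) := by
    rw [hdec, map_add, map_add, map_add, (fderiv ℝ Ψ p).map_smul]
  have hst := hstruct p (f₂ (x₁ t, x₂ t) θ + u t • g₂ (x₁ t, x₂ t))
  rw [sub_eq_iff_eq_add] at hst
  have key : (fderiv ℝ ψ p V • α p + ψ p • fderiv ℝ α p V - fderiv ℝ Ψ p V)
        + (φ (ψ p) • α p
        + fderiv ℝ Ψ p (0, 0, 1)
        - ψ p • fderiv ℝ α p (0, 0, 1)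
        - (ψ p • fderiv ℝ α p (f₁ (x₁ t, x₂ t), 0, 0)
            - fderiv ℝ Ψ p (f₁ (x₁ t, x₂ t), 0, 0))
        - u t • (ψ p • fderiv ℝ α p (g₁ (x₁ t, x₂ t), 0, 0)
            - fderiv ℝ Ψ p (g₁ (x₁ t, x₂ t), 0, 0))
        + β p *ᵥ (f₂ (x₁ t, x₂ t) (θhat t) + u t • g₂ (x₁ t, x₂ t)))
      = (deriv (fun s => ψ (x₁ s, x₂ s, s)) t + φ (ψ p)) • α p
        - β p *ᵥ (f₂ (x₁ t, x₂ t) θ - f₂ (x₁ t, x₂ t) (θhat t)) := by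
    rw [hψdot, happα, happΨ, hst]
    simp only [Matrix.mulVec_add, Matrix.mulVec_smul, Matrix.mulVec_sub, add_smul]
    module
  rw [hLapp, key] at hfinal
  exact hfinal
end

section
/- Let θ ∈ ℝᵈ, let Γ be a symmetric positive-definite real d×d matrix, let α, w : [0,∞) → ℝᵈ and e : [0,∞) → ℝ be continuous, and let θ̂ : [0,∞) → ℝᵈ be differentiable with θ̂'(t) = Γ(e(t)α(t) − w(t)) for all t ≥ 0. Assume for all t ≥ 0: e(t)·(α(t)ᵀ(θ̂(t) − θ)) ≤ 0 and (θ̂(t) − θ)ᵀ w(t) ≥ 0. Then the function t ↦ (θ̂(t) − θ)ᵀ Γ⁻¹ (θ̂(t) − θ) is nonincreasing on [0,∞). -/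
open Matrix

private lemma hasDerivAt_dot {d : ℕ} {f g : ℝ → Fin d → ℝ} {f' g' : Fin d → ℝ} {t : ℝ}
    (hf : HasDerivAt f f' t) (hg : HasDerivAt g g' t) :
    HasDerivAt (fun s => f s ⬝ᵥ g s) (f' ⬝ᵥ g t + f t ⬝ᵥ g') t := by
  simp only [dotProduct, ← Finset.sum_add_distrib]
  exact HasDerivAt.fun_sum fun i _ =>
    (hasDerivAt_pi.1 hf i).mul (hasDerivAt_pi.1 hg i)

/-- property P2: along the adaptation law
`θ̂' = Γ(e·α − w)`, under the monotonicity sign condition on `e` and the sign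
condition on the residual `w`, the `Γ⁻¹`-weighted parametric error
`(θ̂(t) − θ)ᵀ Γ⁻¹ (θ̂(t) − θ)` is nonincreasing on `[0,∞)`. -/
theorem statement3 {d : ℕ} (θ : Fin d → ℝ)
    (Γ : Matrix (Fin d) (Fin d) ℝ) (hΓ : Γ.PosDef)
    (α w : ℝ → (Fin d → ℝ)) (e : ℝ → ℝ)
    (hα : ContinuousOn α (Set.Ici 0)) (hw : ContinuousOn w (Set.Ici 0))
    (he : ContinuousOn e (Set.Ici 0))
    (θhat : ℝ → (Fin d → ℝ))
    (hθhat : ∀ t ≥ (0:ℝ), HasDerivAt θhat (Γ *ᵥ (e t • α t - w t)) t)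
    (hmono : ∀ t ≥ (0:ℝ), e t * (α t ⬝ᵥ (θhat t - θ)) ≤ 0)
    (hres : ∀ t ≥ (0:ℝ), 0 ≤ (θhat t - θ) ⬝ᵥ w t) :
    AntitoneOn (fun t => (θhat t - θ) ⬝ᵥ (Γ⁻¹ *ᵥ (θhat t - θ))) (Set.Ici 0) := by
  have hdet : IsUnit Γ.det := isUnit_iff_ne_zero.mpr (ne_of_gt hΓ.det_pos)
  have hinv : Γ⁻¹ * Γ = 1 := Matrix.nonsing_inv_mul Γ hdet
  have hinv' : Γ * Γ⁻¹ = 1 := Matrix.mul_nonsing_inv Γ hdet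
  have hsym : Γᵀ = Γ := hΓ.1
  -- derivative of V
  have hV : ∀ t ≥ (0:ℝ), HasDerivAt (fun s => (θhat s - θ) ⬝ᵥ (Γ⁻¹ *ᵥ (θhat s - θ)))
      (2 * ((e t • α t - w t) ⬝ᵥ (θhat t - θ))) t := by
    intro t ht
    set u := e t • α t - w t with hu
    have hf : HasDerivAt (fun s => θhat s - θ) (Γ *ᵥ u) t :=
      (hθhat t ht).sub_const θ
    have hg : HasDerivAt (fun s => Γ⁻¹ *ᵥ (θhat s - θ)) (Γ⁻¹ *ᵥ (Γ *ᵥ u)) t := by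
      have := (LinearMap.toContinuousLinearMap ((Γ⁻¹).mulVecLin)).hasFDerivAt.comp_hasDerivAt t hf
      simpa [Function.comp_def, Matrix.mulVecLin_apply] using this
    have h := hasDerivAt_dot hf hg
    have e1 : (θhat t - θ) ⬝ᵥ (Γ⁻¹ *ᵥ (Γ *ᵥ u)) = (θhat t - θ) ⬝ᵥ u := by
      rw [Matrix.mulVec_mulVec, hinv, Matrix.one_mulVec]
    have e2 : (Γ *ᵥ u) ⬝ᵥ (Γ⁻¹ *ᵥ (θhat t - θ)) = (θhat t - θ) ⬝ᵥ u := by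
      rw [dotProduct_comm, dotProduct_mulVec, ← Matrix.mulVec_transpose, hsym,
        Matrix.mulVec_mulVec, hinv', Matrix.one_mulVec, dotProduct_comm]
    rw [e1, e2, ← two_mul, dotProduct_comm] at h
    exact h
  apply antitoneOn_of_deriv_nonpos (convex_Ici 0)
  · intro t ht
    exact ((hV t ht).continuousAt).continuousWithinAt
  · intro t ht
    rw [interior_Ici] at ht
    exact ((hV t (le_of_lt ht)).differentiableAt).differentiableWithinAt
  · intro t ht
    rw [interior_Ici] at ht
    have ht' : (0:ℝ) ≤ t := le_of_lt ht
    rw [(hV t ht').deriv]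
    have : (e t • α t - w t) ⬝ᵥ (θhat t - θ)
        = e t * (α t ⬝ᵥ (θhat t - θ)) - (θhat t - θ) ⬝ᵥ w t := by
      rw [sub_dotProduct, smul_dotProduct, dotProduct_comm (w t)]
      simp [smul_eq_mul]
    rw [this]
    nlinarith [hmono t ht', hres t ht']
end

section
/- Let θ ∈ ℝᵈ, let Γ be a symmetric positive-definite real d×d matrix, let α, w : [0,∞) → ℝᵈ and e : [0,∞) → ℝ be continuous, let D > 0, and let θ̂ : [0,∞) → ℝᵈ be differentiable with θ̂'(t) = Γ(e(t)α(t) − w(t)) for all t ≥ 0. Assume for all t ≥ 0: e(t)·(α(t)ᵀ(θ̂(t) − θ)) ≤ 0, |e(t)| ≤ D·|α(t)ᵀ(θ̂(t) − θ)|, and (θ̂(t) − θ)ᵀ w(t) ≥ 0. Then for every T ≥ 0, ∫₀ᵀ e(t)² dt ≤ (D/2)·(θ̂(0) − θ)ᵀ Γ⁻¹ (θ̂(0) − θ); in particular e ∈ L²([0,∞)). -/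
open Matrix MeasureTheory intervalIntegral

/-- Derivative of a quadratic form along a differentiable curve. -/
lemma quadform_hasDerivAt {d : ℕ} (M : Matrix (Fin d) (Fin d) ℝ)
    {f : ℝ → Fin d → ℝ} {f' : Fin d → ℝ} {t : ℝ} (hf : HasDerivAt f f' t) :
    HasDerivAt (fun s => f s ⬝ᵥ (M *ᵥ f s))
      (f' ⬝ᵥ (M *ᵥ f t) + f t ⬝ᵥ (M *ᵥ f')) t := by
  have hc : ∀ i, HasDerivAt (fun s => f s i) (f' i) t := fun i => hasDerivAt_pi.1 hf i
  have h : ∀ i, HasDerivAt (fun s => f s i * (M *ᵥ f s) i)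
      (f' i * (M *ᵥ f t) i + f t i * (M *ᵥ f') i) t := by
    intro i
    have hM : HasDerivAt (fun s => (M *ᵥ f s) i) ((M *ᵥ f') i) t := by
      simp only [mulVec, dotProduct]
      exact HasDerivAt.fun_sum fun j _ => (hc j).const_mul (M i j)
    exact (hc i).mul hM
  have := HasDerivAt.fun_sum (fun i (_ : i ∈ Finset.univ) => h i)
  simpa [dotProduct, Finset.sum_add_distrib] using this

/-- property P3: along the adaptation law `θ̂' = Γ(e·α − w)`,
under the monotonicity and linear growth-rate conditions on the matching
error `e` and the sign condition on the residual `w`, the matching error is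
square integrable with the explicit bound
`∫₀ᵀ e² ≤ (D/2)·(θ̂(0) − θ)ᵀ Γ⁻¹ (θ̂(0) − θ)`. -/
theorem statement4 {d : ℕ} (θ : Fin d → ℝ)
    (Γ : Matrix (Fin d) (Fin d) ℝ) (hΓ : Γ.PosDef)
    (α w : ℝ → (Fin d → ℝ)) (e : ℝ → ℝ) (D : ℝ) (hD : 0 < D)
    (hα : ContinuousOn α (Set.Ici 0)) (hw : ContinuousOn w (Set.Ici 0))
    (he : ContinuousOn e (Set.Ici 0))
    (θhat : ℝ → (Fin d → ℝ))
    (hθhat : ∀ t ≥ (0:ℝ), HasDerivAt θhat (Γ *ᵥ (e t • α t - w t)) t)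
    (hmono : ∀ t ≥ (0:ℝ), e t * (α t ⬝ᵥ (θhat t - θ)) ≤ 0)
    (hgrowth : ∀ t ≥ (0:ℝ), |e t| ≤ D * |α t ⬝ᵥ (θhat t - θ)|)
    (hres : ∀ t ≥ (0:ℝ), 0 ≤ (θhat t - θ) ⬝ᵥ w t) :
    (∀ T ≥ (0:ℝ), ∫ t in (0:ℝ)..T, (e t) ^ 2 ≤
        (D / 2) * ((θhat 0 - θ) ⬝ᵥ (Γ⁻¹ *ᵥ (θhat 0 - θ)))) ∧
      IntegrableOn (fun t => (e t) ^ 2) (Set.Ici 0) := by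
  have hdet : IsUnit Γ.det := (Matrix.isUnit_iff_isUnit_det Γ).1 hΓ.isUnit
  have hΓT : Γᵀ = Γ := by
    have := hΓ.1.eq
    rwa [Matrix.conjTranspose_eq_transpose_of_trivial] at this
  -- the Lyapunov function
  set δ : ℝ → Fin d → ℝ := fun s => θhat s - θ with hδdef
  set V : ℝ → ℝ := fun s => δ s ⬝ᵥ (Γ⁻¹ *ᵥ δ s) with hVdef
  set u : ℝ → Fin d → ℝ := fun s => e s • α s - w s with hudef
  have hδ : ∀ t ≥ (0:ℝ), HasDerivAt δ (Γ *ᵥ u t) t := fun t ht =>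
    (hθhat t ht).sub_const θ
  -- derivative of V
  have hV : ∀ t ≥ (0:ℝ), HasDerivAt V (2 * (δ t ⬝ᵥ u t)) t := by
    intro t ht
    have h := quadform_hasDerivAt Γ⁻¹ (hδ t ht)
    have h1 : Γ⁻¹ *ᵥ (Γ *ᵥ u t) = u t := by
      rw [Matrix.mulVec_mulVec, Matrix.nonsing_inv_mul Γ hdet, Matrix.one_mulVec]
    have h2 : (Γ *ᵥ u t) ⬝ᵥ (Γ⁻¹ *ᵥ δ t) = u t ⬝ᵥ δ t := by
      rw [dotProduct_comm, Matrix.dotProduct_mulVec, ← Matrix.mulVec_transpose, hΓT,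
        Matrix.mulVec_mulVec, Matrix.mul_nonsing_inv Γ hdet, Matrix.one_mulVec,
        dotProduct_comm]
    rw [h1, h2, dotProduct_comm] at h
    convert h using 1
    ring
  -- the key pointwise inequality
  have hkey : ∀ t ≥ (0:ℝ), 2 * (δ t ⬝ᵥ u t) ≤ -((2 / D) * (e t) ^ 2) := by
    intro t ht
    have hdu : δ t ⬝ᵥ u t = e t * (α t ⬝ᵥ δ t) - δ t ⬝ᵥ w t := by
      simp [hudef, dotProduct_sub, dotProduct_smul, dotProduct_comm (α t),
        smul_eq_mul]
    have h1 : e t * (α t ⬝ᵥ δ t) ≤ 0 := hmono t ht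
    have h2 : |e t| ≤ D * |α t ⬝ᵥ δ t| := hgrowth t ht
    have h3 : 0 ≤ δ t ⬝ᵥ w t := hres t ht
    have habs : e t * (α t ⬝ᵥ δ t) = -(|e t| * |α t ⬝ᵥ δ t|) := by
      rw [← abs_mul]
      linarith [abs_of_nonpos h1]
    have hEa : (e t) ^ 2 ≤ D * (|e t| * |α t ⬝ᵥ δ t|) := by
      nlinarith [mul_le_mul_of_nonneg_left h2 (abs_nonneg (e t)), sq_abs (e t)]
    have h4 : e t * (α t ⬝ᵥ δ t) ≤ -((e t) ^ 2 / D) := by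
      rw [habs, neg_le_neg_iff, div_le_iff₀ hD]
      linarith
    rw [hdu]
    have : 2 * (e t * (α t ⬝ᵥ δ t) - δ t ⬝ᵥ w t) ≤ 2 * (-((e t) ^ 2 / D)) := by
      nlinarith
    calc 2 * (e t * (α t ⬝ᵥ δ t) - δ t ⬝ᵥ w t) ≤ 2 * (-((e t) ^ 2 / D)) := this
      _ = -((2 / D) * (e t) ^ 2) := by ring
  -- continuity and integrability of e^2
  have hesq : ContinuousOn (fun t => (e t) ^ 2) (Set.Ici 0) := he.pow 2
  have hInt : ∀ x : ℝ, 0 ≤ x → IntervalIntegrable (fun t => (e t) ^ 2) volume 0 x := by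
    intro x hx
    apply ContinuousOn.intervalIntegrable
    rw [Set.uIcc_of_le hx]
    exact hesq.mono (fun s hs => hs.1)
  -- the main bound for each T
  have main : ∀ T ≥ (0:ℝ), (∫ t in (0:ℝ)..T, (e t) ^ 2) ≤ (D / 2) * V 0 := by
    intro T hT
    set F : ℝ → ℝ := fun x => ∫ t in (0:ℝ)..x, (e t) ^ 2 with hFdef
    set G : ℝ → ℝ := fun x => V x + (2 / D) * F x with hGdef
    -- continuity of G on Icc 0 T
    have hVcont : ContinuousOn V (Set.Icc 0 T) := by
      intro x hx
      exact ((hV x hx.1).continuousAt).continuousWithinAt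
    have hFcont : ContinuousOn F (Set.Icc 0 T) := by
      have : Set.Icc (0:ℝ) T = Set.uIcc 0 T := (Set.uIcc_of_le hT).symm
      rw [this]
      apply intervalIntegral.continuousOn_primitive_interval
      rw [← this]
      exact (hesq.mono (fun s hs => hs.1)).integrableOn_compact isCompact_Icc
    have hGcont : ContinuousOn G (Set.Icc 0 T) := hVcont.add (continuousOn_const.mul hFcont)
    -- derivative bound on the interior
    have hGd : ∀ x ∈ Set.Ioo (0:ℝ) T,
        HasDerivAt G (2 * (δ x ⬝ᵥ u x) + (2 / D) * (e x) ^ 2) x := by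
      intro x hx
      have hx0 : (0:ℝ) ≤ x := hx.1.le
      have hFd : HasDerivAt F ((e x) ^ 2) x := by
        apply intervalIntegral.integral_hasDerivAt_right (hInt x hx0)
        · exact ContinuousOn.stronglyMeasurableAtFilter isOpen_Ioi
            (hesq.mono Set.Ioi_subset_Ici_self) x hx.1
        · exact (hesq x hx.1.le).continuousAt (Ici_mem_nhds hx.1)
      exact (hV x hx0).add ((hFd.const_mul (2 / D)))
    have hanti : AntitoneOn G (Set.Icc 0 T) := by
      apply antitoneOn_of_deriv_nonpos (convex_Icc 0 T) hGcont
      · intro x hx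
        rw [interior_Icc] at hx
        exact ((hGd x hx).differentiableAt).differentiableWithinAt
      · intro x hx
        rw [interior_Icc] at hx
        rw [(hGd x hx).deriv]
        have := hkey x hx.1.le
        linarith
    have hG : G T ≤ G 0 := hanti ⟨le_refl 0, hT⟩ ⟨hT, le_refl T⟩ hT
    have hF0 : F 0 = 0 := intervalIntegral.integral_same
    have hVT : 0 ≤ V T := by
      have := (hΓ.inv.posSemidef).dotProduct_mulVec_nonneg (δ T)
      simpa using this
    have : V T + (2 / D) * F T ≤ V 0 + (2 / D) * 0 := by
      simpa [hGdef, hF0] using hG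
    have hFT : F T ≤ (D / 2) * V 0 := by
      have h5 : (2 / D) * F T ≤ V 0 := by linarith
      have h6 := mul_le_mul_of_nonneg_left h5 hD.le
      rw [show D * (2 / D * F T) = 2 * F T by field_simp] at h6
      linarith
    exact hFT
  constructor
  · exact main
  · -- integrability on [0, ∞)
    have hIoi : IntegrableOn (fun t => (e t) ^ 2) (Set.Ioi 0) := by
      apply MeasureTheory.integrableOn_Ioi_of_intervalIntegral_norm_bounded
        ((D / 2) * V 0) 0 (b := fun i : ℝ => i) (l := Filter.atTop)
      · intro i
        rcases le_or_gt i 0 with hi | hi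
        · rw [Set.Ioc_eq_empty (by exact not_lt.mpr hi)]
          exact integrableOn_empty
        · exact (hInt i hi.le).1
      · exact Filter.tendsto_id
      · filter_upwards [Filter.eventually_ge_atTop (0:ℝ)] with i hi
        have : (∫ x in (0:ℝ)..i, ‖(e x) ^ 2‖) = ∫ x in (0:ℝ)..i, (e x) ^ 2 := by
          apply intervalIntegral.integral_congr
          intro x _
          simp [abs_of_nonneg (sq_nonneg (e x))]
        rw [this]
        exact main i hi
    rwa [integrableOn_Ici_iff_integrableOn_Ioi]
end

section
/- Let θ ∈ ℝᵈ, let Γ be a symmetric positive-definite real d×d matrix, let α, w : [0,∞) → ℝᵈ and e : [0,∞) → ℝ be continuous, let D > 0, and let θ̂ : [0,∞) → ℝᵈ be differentiable with θ̂'(t) = Γ(e(t)α(t) − w(t)). Assume for all t ≥ 0: e(t)·(α(t)ᵀ(θ̂(t) − θ)) ≤ 0, |e(t)| ≤ D·|α(t)ᵀ(θ̂(t) − θ)|, and (θ̂(t) − θ)ᵀ w(t) ≥ 0. Let φ : ℝ → ℝ be continuous with s·φ(s) > 0 for all s ≠ 0, set Q(s) := ∫₀ˢ φ(ς) dς, and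 let ψ : [0,∞) → ℝ be continuously differentiable with ψ'(t) = e(t) − φ(ψ(t)) for all t ≥ 0. Then for every T ≥ 0: (i) ∫₀ᵀ φ(ψ(t))² dt ≤ 2Q(ψ(0)) + (D/2)·(θ̂(0) − θ)ᵀΓ⁻¹(θ̂(0) − θ); (ii) ∫₀ᵀ ψ'(t)² dt ≤ 2Q(ψ(0)) + (D/2)·(θ̂(0) − θ)ᵀΓ⁻¹(θ̂(0) − θ); (iii) Q(ψ(T)) ≤ Q(ψ(0)) + (D/4)·(θ̂(0) − θ)ᵀΓ⁻¹(θ̂(0) − θ). -/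
open Matrix intervalIntegral

/-- property P1 and transient performance bounds: along the
adaptation law `θ̂' = Γ(e·α − w)` and the error model `ψ̇ = e − φ(ψ)`, the
`L²` norms of `φ(ψ)` and `ψ̇` and the value `Q(ψ(T))` admit explicit bounds
computable from the initial data. -/
theorem statement5 {d : ℕ} (θ : Fin d → ℝ)
    (Γ : Matrix (Fin d) (Fin d) ℝ) (hΓ : Γ.PosDef)
    (α w : ℝ → (Fin d → ℝ)) (e : ℝ → ℝ) (D : ℝ) (hD : 0 < D)
    (hα : ContinuousOn α (Set.Ici 0)) (hw : ContinuousOn w (Set.Ici 0))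
    (he : ContinuousOn e (Set.Ici 0))
    (θhat : ℝ → (Fin d → ℝ))
    (hθhat : ∀ t ≥ (0:ℝ), HasDerivAt θhat (Γ *ᵥ (e t • α t - w t)) t)
    (hmono : ∀ t ≥ (0:ℝ), e t * (α t ⬝ᵥ (θhat t - θ)) ≤ 0)
    (hgrowth : ∀ t ≥ (0:ℝ), |e t| ≤ D * |α t ⬝ᵥ (θhat t - θ)|)
    (hres : ∀ t ≥ (0:ℝ), 0 ≤ (θhat t - θ) ⬝ᵥ w t)
    (φ : ℝ → ℝ) (hφc : Continuous φ) (hφ : ∀ s : ℝ, s ≠ 0 → 0 < s * φ s)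
    (Q : ℝ → ℝ) (hQ : ∀ s : ℝ, Q s = ∫ ς in (0:ℝ)..s, φ ς)
    (ψ : ℝ → ℝ)
    (hψ : ∀ t ≥ (0:ℝ), HasDerivAt ψ (e t - φ (ψ t)) t) :
    ∀ T ≥ (0:ℝ),
      (∫ t in (0:ℝ)..T, (φ (ψ t)) ^ 2 ≤
          2 * Q (ψ 0) + (D / 2) * ((θhat 0 - θ) ⬝ᵥ (Γ⁻¹ *ᵥ (θhat 0 - θ)))) ∧
      (∫ t in (0:ℝ)..T, (e t - φ (ψ t)) ^ 2 ≤
          2 * Q (ψ 0) + (D / 2) * ((θhat 0 - θ) ⬝ᵥ (Γ⁻¹ *ᵥ (θhat 0 - θ)))) ∧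
      Q (ψ T) ≤ Q (ψ 0) + (D / 4) * ((θhat 0 - θ) ⬝ᵥ (Γ⁻¹ *ᵥ (θhat 0 - θ))) := by
  intro T hT
  -- basic matrix facts
  have hdet : IsUnit Γ.det := isUnit_iff_ne_zero.mpr hΓ.det_pos.ne'
  have hMul : Γ * Γ⁻¹ = 1 := Matrix.mul_nonsing_inv Γ hdet
  have hMul' : Γ⁻¹ * Γ = 1 := Matrix.nonsing_inv_mul Γ hdet
  have hsymm : Γᵀ = Γ := by
    have := hΓ.1
    simpa [Matrix.IsHermitian, Matrix.conjTranspose_eq_transpose_of_trivial] using this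
  -- φ 0 = 0
  have hφ0 : φ 0 = 0 := by
    have hcont : ContinuousAt φ 0 := hφc.continuousAt
    have h1 : φ 0 ≤ 0 := by
      have ht : Filter.Tendsto φ (nhdsWithin 0 (Set.Iio 0)) (nhds (φ 0)) :=
        hcont.tendsto.mono_left nhdsWithin_le_nhds
      refine le_of_tendsto ht ?_
      filter_upwards [self_mem_nhdsWithin] with s hs
      have hs' : s < 0 := hs
      nlinarith [hφ s (ne_of_lt hs')]
    have h2 : 0 ≤ φ 0 := by
      have ht : Filter.Tendsto φ (nhdsWithin 0 (Set.Ioi 0)) (nhds (φ 0)) :=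
        hcont.tendsto.mono_left nhdsWithin_le_nhds
      refine ge_of_tendsto ht ?_
      filter_upwards [self_mem_nhdsWithin] with s hs
      have hs' : 0 < s := hs
      nlinarith [hφ s (ne_of_gt hs')]
    linarith
  have hφnn : ∀ s : ℝ, 0 ≤ s → 0 ≤ φ s := by
    intro s hs
    rcases eq_or_lt_of_le hs with h | h
    · simp [← h, hφ0]
    · nlinarith [hφ s (ne_of_gt h)]
  have hφnp : ∀ s : ℝ, s ≤ 0 → φ s ≤ 0 := by
    intro s hs
    rcases eq_or_lt_of_le hs with h | h
    · simp [h, hφ0]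
    · nlinarith [hφ s (ne_of_lt h)]
  -- Q is nonnegative
  have hQnn : ∀ s : ℝ, 0 ≤ Q s := by
    intro s
    rw [hQ]
    rcases le_or_gt 0 s with hs | hs
    · exact intervalIntegral.integral_nonneg hs fun u hu => hφnn u hu.1
    · rw [intervalIntegral.integral_symm]
      have : (0:ℝ) ≤ ∫ ς in s..0, -φ ς :=
        intervalIntegral.integral_nonneg hs.le fun u hu => by
          simpa using hφnp u hu.2
      rw [intervalIntegral.integral_neg] at this
      linarith
  -- derivative of Q
  have hQ' : ∀ s : ℝ, HasDerivAt Q (φ s) s := by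
    intro s
    have h : HasDerivAt (fun x => ∫ ς in (0:ℝ)..x, φ ς) (φ s) s :=
      intervalIntegral.integral_hasDerivAt_right (hφc.intervalIntegrable 0 s)
        (hφc.stronglyMeasurableAtFilter _ _) hφc.continuousAt
    rw [show Q = fun x => ∫ ς in (0:ℝ)..x, φ ς from funext hQ]
    exact h
  set v : ℝ → Fin d → ℝ := fun t => θhat t - θ with hv
  set u : ℝ → Fin d → ℝ := fun t => e t • α t - w t with hu
  set g : ℝ → ℝ := fun t => v t ⬝ᵥ (Γ⁻¹ *ᵥ v t) with hg
  -- derivative of v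
  have hv' : ∀ t ≥ (0:ℝ), HasDerivAt v (Γ *ᵥ u t) t := fun t ht =>
    (hθhat t ht).sub_const θ
  -- derivative of g
  have hg' : ∀ t ≥ (0:ℝ), HasDerivAt g (2 * (u t ⬝ᵥ v t)) t := by
    intro t ht
    have hvc : ∀ i, HasDerivAt (fun s => v s i) ((Γ *ᵥ u t) i) t :=
      hasDerivAt_pi.mp (hv' t ht)
    have h1 : HasDerivAt (fun s => ∑ i, v s i * (∑ j, Γ⁻¹ i j * v s j))
        (∑ i, ((Γ *ᵥ u t) i * (∑ j, Γ⁻¹ i j * v t j)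
          + v t i * (∑ j, Γ⁻¹ i j * (Γ *ᵥ u t) j))) t := by
      refine HasDerivAt.fun_sum fun i _ => ?_
      exact (hvc i).mul (HasDerivAt.fun_sum fun j _ => (hvc j).const_mul _)
    have hgeq : g = fun s => ∑ i, v s i * (∑ j, Γ⁻¹ i j * v s j) := by
      funext s
      simp [hg, dotProduct, Matrix.mulVec, dotProduct]
    rw [hgeq]
    convert h1 using 1
    have e1 : ∀ x y : Fin d → ℝ,
        ∑ i, x i * (∑ j, Γ⁻¹ i j * y j) = x ⬝ᵥ (Γ⁻¹ *ᵥ y) := by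
      intro x y
      simp [dotProduct, Matrix.mulVec]
    have e2 : Γ⁻¹ *ᵥ (Γ *ᵥ u t) = u t := by
      rw [Matrix.mulVec_mulVec, hMul', Matrix.one_mulVec]
    have hinvsymm : (Γ⁻¹)ᵀ = Γ⁻¹ := by
      rw [Matrix.transpose_nonsing_inv, hsymm]
    have e3 : (Γ *ᵥ u t) ⬝ᵥ (Γ⁻¹ *ᵥ v t) = u t ⬝ᵥ v t := by
      rw [Matrix.dotProduct_mulVec, ← Matrix.mulVec_transpose, hinvsymm,
        Matrix.mulVec_mulVec, hMul', Matrix.one_mulVec]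
    calc 2 * (u t ⬝ᵥ v t)
        = (Γ *ᵥ u t) ⬝ᵥ (Γ⁻¹ *ᵥ v t) + v t ⬝ᵥ (Γ⁻¹ *ᵥ (Γ *ᵥ u t)) := by
          rw [e2, e3, dotProduct_comm (v t) (u t)]; ring
      _ = ∑ i, ((Γ *ᵥ u t) i * (∑ j, Γ⁻¹ i j * v t j)
          + v t i * (∑ j, Γ⁻¹ i j * (Γ *ᵥ u t) j)) := by
          rw [Finset.sum_add_distrib, e1, e1]
  -- g is nonnegative
  have hgnn : ∀ t : ℝ, 0 ≤ g t := by
    intro t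
    have := hΓ.inv.posSemidef.re_dotProduct_nonneg (v t)
    simpa using this
  -- key pointwise inequality
  have hkey : ∀ t ≥ (0:ℝ), u t ⬝ᵥ v t ≤ -(e t ^ 2) / D := by
    intro t ht
    have h1 : u t ⬝ᵥ v t = e t * (α t ⬝ᵥ v t) - v t ⬝ᵥ w t := by
      rw [hu]
      rw [sub_dotProduct, smul_dotProduct]
      rw [dotProduct_comm (v t) (w t)]
      simp [smul_eq_mul]
    have h2 := hmono t ht
    have h3 := hgrowth t ht
    have h4 := hres t ht
    have h5 : e t ^ 2 ≤ D * (-(e t * (α t ⬝ᵥ v t))) := by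
      have habs : |e t| * |e t| ≤ |e t| * (D * |α t ⬝ᵥ v t|) :=
        mul_le_mul_of_nonneg_left h3 (abs_nonneg _)
      have : |e t| * |α t ⬝ᵥ v t| = -(e t * (α t ⬝ᵥ v t)) := by
        rw [← abs_mul, abs_of_nonpos h2]
      nlinarith [abs_mul_abs_self (e t)]
    rw [h1, le_div_iff₀ hD]
    nlinarith [mul_nonneg h4 hD.le]
  -- Lyapunov function
  set V : ℝ → ℝ := fun t => Q (ψ t) + (D / 4) * g t with hV
  set F : ℝ → ℝ := fun t =>
    φ (ψ t) * (e t - φ (ψ t)) + (D / 4) * (2 * (u t ⬝ᵥ v t)) with hF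
  have hV' : ∀ t ≥ (0:ℝ), HasDerivAt V (F t) t := by
    intro t ht
    exact ((hQ' (ψ t)).comp t (hψ t ht)).add (((hg' t ht)).const_mul (D / 4))
  -- continuity facts on [0, T]
  have hsub : Set.uIcc (0:ℝ) T ⊆ Set.Ici 0 := by
    rw [Set.uIcc_of_le hT]
    exact fun x hx => hx.1
  have hψc : ContinuousOn ψ (Set.Ici 0) := fun t ht =>
    ((hψ t ht).continuousAt).continuousWithinAt
  have hvc : ContinuousOn v (Set.Ici 0) := fun t ht =>
    ((hv' t ht).continuousAt).continuousWithinAt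
  have hcomp : ∀ (f : ℝ → Fin d → ℝ), ContinuousOn f (Set.Ici 0) →
      ∀ i, ContinuousOn (fun t => f t i) (Set.Ici 0) := by
    intro f hf i
    exact (continuous_apply i).comp_continuousOn hf
  have hdotc : ∀ (f h : ℝ → Fin d → ℝ), ContinuousOn f (Set.Ici 0) →
      ContinuousOn h (Set.Ici 0) →
      ContinuousOn (fun t => f t ⬝ᵥ h t) (Set.Ici 0) := by
    intro f h hf hh
    have : (fun t => f t ⬝ᵥ h t) = fun t => ∑ i, f t i * h t i := by
      funext t; simp [dotProduct]
    rw [this]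
    exact continuousOn_finset_sum _ fun i _ => (hcomp f hf i).mul (hcomp h hh i)
  have huc : ContinuousOn u (Set.Ici 0) := (he.smul hα).sub hw
  have hFc : ContinuousOn F (Set.Ici 0) := by
    have h1 : ContinuousOn (fun t => φ (ψ t)) (Set.Ici 0) :=
      hφc.comp_continuousOn hψc
    exact (h1.mul (he.sub h1)).add
      (continuousOn_const.mul (continuousOn_const.mul (hdotc u v huc hvc)))
  have hFi : IntervalIntegrable F MeasureTheory.volume 0 T :=
    (hFc.mono hsub).intervalIntegrable
  -- the comparison integrand
  set G : ℝ → ℝ := fun t => -(1/2) * (e t - φ (ψ t)) ^ 2 - (1/2) * (φ (ψ t)) ^ 2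
    with hGdef
  have hGc : ContinuousOn G (Set.Ici 0) := by
    have h1 : ContinuousOn (fun t => φ (ψ t)) (Set.Ici 0) :=
      hφc.comp_continuousOn hψc
    exact (continuousOn_const.mul ((he.sub h1).pow 2)).sub
      (continuousOn_const.mul (h1.pow 2))
  have hGi : IntervalIntegrable G MeasureTheory.volume 0 T :=
    (hGc.mono hsub).intervalIntegrable
  have hFG : ∀ t ∈ Set.Icc (0:ℝ) T, F t ≤ G t := by
    intro t ht
    have hk := hkey t ht.1
    have : (D / 4) * (2 * (u t ⬝ᵥ v t)) ≤ (D / 4) * (2 * (-(e t ^ 2) / D)) := by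
      have := mul_le_mul_of_nonneg_left (mul_le_mul_of_nonneg_left hk (by norm_num : (0:ℝ) ≤ 2)) (by linarith : (0:ℝ) ≤ D / 4)
      linarith
    have hDne : D ≠ 0 := hD.ne'
    have heq : (D / 4) * (2 * (-(e t ^ 2) / D)) = -(e t ^ 2) / 2 := by
      field_simp; ring
    rw [hF, hGdef]
    simp only
    nlinarith [this]
  -- fundamental theorem of calculus
  have hFTC : ∫ t in (0:ℝ)..T, F t = V T - V 0 := by
    refine intervalIntegral.integral_eq_sub_of_hasDerivAt (fun t ht => ?_) hFi
    exact hV' t (hsub ht)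
  have hle : ∫ t in (0:ℝ)..T, F t ≤ ∫ t in (0:ℝ)..T, G t :=
    intervalIntegral.integral_mono_on hT hFi hGi hFG
  -- split G's integral
  have h1c : ContinuousOn (fun t => (e t - φ (ψ t)) ^ 2) (Set.Ici 0) := by
    have h1 : ContinuousOn (fun t => φ (ψ t)) (Set.Ici 0) :=
      hφc.comp_continuousOn hψc
    exact (he.sub h1).pow 2
  have h2c : ContinuousOn (fun t => (φ (ψ t)) ^ 2) (Set.Ici 0) :=
    ((hφc.comp_continuousOn hψc)).pow 2
  have h1i : IntervalIntegrable (fun t => (e t - φ (ψ t)) ^ 2)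
      MeasureTheory.volume 0 T := (h1c.mono hsub).intervalIntegrable
  have h2i : IntervalIntegrable (fun t => (φ (ψ t)) ^ 2)
      MeasureTheory.volume 0 T := (h2c.mono hsub).intervalIntegrable
  have hGsplit : ∫ t in (0:ℝ)..T, G t =
      -(1/2) * (∫ t in (0:ℝ)..T, (e t - φ (ψ t)) ^ 2)
      - (1/2) * (∫ t in (0:ℝ)..T, (φ (ψ t)) ^ 2) := by
    rw [hGdef]
    rw [intervalIntegral.integral_sub (h1i.const_mul _) (h2i.const_mul _),
      intervalIntegral.integral_const_mul, intervalIntegral.integral_const_mul]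
  have hI1nn : 0 ≤ ∫ t in (0:ℝ)..T, (e t - φ (ψ t)) ^ 2 :=
    intervalIntegral.integral_nonneg hT fun t _ => sq_nonneg _
  have hI2nn : 0 ≤ ∫ t in (0:ℝ)..T, (φ (ψ t)) ^ 2 :=
    intervalIntegral.integral_nonneg hT fun t _ => sq_nonneg _
  have hVTnn : Q (ψ T) + (D / 4) * g T ≥ Q (ψ T) := by
    nlinarith [hgnn T, hD]
  have hmain : V T + (1/2) * (∫ t in (0:ℝ)..T, (e t - φ (ψ t)) ^ 2)
      + (1/2) * (∫ t in (0:ℝ)..T, (φ (ψ t)) ^ 2) ≤ V 0 := by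
    have := hle
    rw [hFTC, hGsplit] at this
    linarith
  have hV0 : V 0 = Q (ψ 0) + (D / 4) * ((θhat 0 - θ) ⬝ᵥ (Γ⁻¹ *ᵥ (θhat 0 - θ))) := rfl
  have hVT : V T = Q (ψ T) + (D / 4) * g T := rfl
  have hQTnn : 0 ≤ Q (ψ T) := hQnn _
  have hgTnn : 0 ≤ g T := hgnn T
  have hg0 : g 0 = (θhat 0 - θ) ⬝ᵥ (Γ⁻¹ *ᵥ (θhat 0 - θ)) := rfl
  refine ⟨?_, ?_, ?_⟩
  · rw [hV0, hVT] at hmain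
    nlinarith [hD]
  · rw [hV0, hVT] at hmain
    nlinarith [hD]
  · rw [hV0, hVT] at hmain
    nlinarith [hD]
end

section
/- Let ψ : [0,∞) → ℝ be differentiable and suppose there exist M, B > 0 with |ψ'(t)| ≤ M and |ψ(t)| ≤ B for all t ≥ 0. Let φ : ℝ → ℝ be continuous with s·φ(s) > 0 for all s ≠ 0, and assume ∫₀^∞ φ(ψ(t))² dt < ∞. Then ψ(t) → 0 as t → ∞. -/
open MeasureTheory

/-- property P4, Barbalat-type argument: if `ψ` is bounded with
bounded derivative on `[0,∞)`, `φ` is continuous with `s·φ(s) > 0` for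
`s ≠ 0`, and `φ(ψ)` is square integrable on `[0,∞)`, then `ψ(t) → 0` as
`t → ∞`. -/
theorem statement6 (ψ ψ' : ℝ → ℝ)
    (hψ : ∀ t ≥ (0:ℝ), HasDerivAt ψ (ψ' t) t)
    (M B : ℝ) (hM : 0 < M) (hB : 0 < B)
    (hψ'bd : ∀ t ≥ (0:ℝ), |ψ' t| ≤ M)
    (hψbd : ∀ t ≥ (0:ℝ), |ψ t| ≤ B)
    (φ : ℝ → ℝ) (hφc : Continuous φ) (hφ : ∀ s : ℝ, s ≠ 0 → 0 < s * φ s)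
    (hint : IntegrableOn (fun t => (φ (ψ t)) ^ 2) (Set.Ici 0)) :
    Filter.Tendsto ψ Filter.atTop (nhds 0) := by
  by_contra hcon
  rw [Metric.tendsto_atTop] at hcon
  push_neg at hcon
  obtain ⟨ε, hε, hεprop⟩ := hcon
  simp only [Real.dist_eq, sub_zero] at hεprop
  -- δ : half-width needed so that ψ stays ≥ ε/2
  set δ : ℝ := ε / (2 * M) with hδdef
  have hδ : 0 < δ := by positivity
  -- the recursive sequence of times
  have hex : ∀ T : ℝ, ∃ t, T ≤ t ∧ ε ≤ |ψ t| := by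
    intro T
    obtain ⟨t, ht, h2⟩ := hεprop T
    exact ⟨t, ht, h2⟩
  let u : ℕ → ℝ := fun n => Nat.rec ((hex 0).choose)
    (fun _ p => (hex (p + δ + 1)).choose) n
  have hu0 : (0:ℝ) ≤ u 0 := (hex 0).choose_spec.1
  have husucc : ∀ n, u n + δ + 1 ≤ u (n+1) := fun n =>
    (hex (u n + δ + 1)).choose_spec.1
  have huε : ∀ n, ε ≤ |ψ (u n)| := by
    intro n
    cases n with
    | zero => exact (hex 0).choose_spec.2
    | succ k => exact (hex (u k + δ + 1)).choose_spec.2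
  have hupos : ∀ n, (0:ℝ) ≤ u n := by
    intro n
    induction n with
    | zero => exact hu0
    | succ k ih => have := husucc k; linarith
  have humono : ∀ m n, m < n → u m + δ + 1 ≤ u n := by
    intro m n hmn
    induction n with
    | zero => omega
    | succ k ih =>
      rcases Nat.lt_succ_iff_lt_or_eq.mp hmn with h | h
      · have := husucc k; have := ih h; linarith
      · subst h; exact husucc m
  -- ε ≤ B
  have hεB : ε ≤ B := le_trans (huε 0) (hψbd _ hu0)
  -- on each interval [u n, u n + δ], |ψ t| ≥ ε/2
  have hlow : ∀ n, ∀ t ∈ Set.Icc (u n) (u n + δ), ε / 2 ≤ |ψ t| := by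
    intro n t ht
    have hconv : Convex ℝ (Set.Icc (u n) (u n + δ)) := convex_Icc _ _
    have hmvt : ‖ψ t - ψ (u n)‖ ≤ M * ‖t - u n‖ := by
      apply hconv.norm_image_sub_le_of_norm_hasDerivWithin_le
        (f' := ψ') ?_ ?_ (Set.left_mem_Icc.2 (by linarith)) ht
      · intro x hx
        exact (hψ x (le_trans (hupos n) hx.1)).hasDerivWithinAt
      · intro x hx
        simpa using hψ'bd x (le_trans (hupos n) hx.1)
    have h1 : |t - u n| ≤ δ := by
      rw [abs_le]; constructor <;> [linarith [ht.1]; linarith [ht.2]]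
    have h2 : |ψ t - ψ (u n)| ≤ ε / 2 := by
      calc |ψ t - ψ (u n)| ≤ M * |t - u n| := hmvt
        _ ≤ M * δ := by nlinarith
        _ = ε / 2 := by rw [hδdef]; field_simp
    have := huε n
    have := abs_sub_abs_le_abs_sub (ψ (u n)) (ψ t)
    have : |ψ (u n)| - |ψ t| ≤ ε / 2 := by
      calc |ψ (u n)| - |ψ t| ≤ |ψ (u n) - ψ t| := abs_sub_abs_le_abs_sub _ _
        _ = |ψ t - ψ (u n)| := abs_sub_comm _ _
        _ ≤ ε / 2 := h2
    linarith
  -- the compact set K and the minimum c of φ² on it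
  set K : Set ℝ := Set.Icc (-B) (-(ε/2)) ∪ Set.Icc (ε/2) B with hKdef
  have hKcompact : IsCompact K := (isCompact_Icc).union (isCompact_Icc)
  have hKne : K.Nonempty := ⟨B, Or.inr ⟨by linarith, le_refl _⟩⟩
  obtain ⟨s₀, hs₀K, hs₀min⟩ :=
    hKcompact.exists_isMinOn hKne ((hφc.pow 2).continuousOn)
  have hs₀ne : s₀ ≠ 0 := by
    intro h
    rcases hs₀K with h1 | h1
    · have := h1.2; rw [h] at this; linarith
    · have := h1.1; rw [h] at this; linarith
  have hφs₀ : φ s₀ ≠ 0 := by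
    intro h
    have := hφ s₀ hs₀ne
    rw [h, mul_zero] at this; exact lt_irrefl 0 this
  set c : ℝ := (φ s₀) ^ 2 with hcdef
  have hc : 0 < c := pow_two_pos_of_ne_zero hφs₀
  -- ψ t ∈ K on each interval
  have hmem : ∀ n, ∀ t ∈ Set.Icc (u n) (u n + δ), ψ t ∈ K := by
    intro n t ht
    have h1 := hlow n t ht
    have h2 := hψbd t (le_trans (hupos n) ht.1)
    rcases le_or_gt 0 (ψ t) with h | h
    · right
      constructor
      · rwa [abs_of_nonneg h] at h1
      · rwa [abs_of_nonneg h] at h2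
    · left
      constructor
      · rw [abs_of_neg h] at h2; linarith
      · rw [abs_of_neg h] at h1; linarith
  -- each interval contributes at least c * δ to the integral
  have hbelow : ∀ n, c * δ ≤ ∫ t in Set.Icc (u n) (u n + δ), (φ (ψ t)) ^ 2 := by
    intro n
    have hmeas : MeasurableSet (Set.Icc (u n) (u n + δ)) := measurableSet_Icc
    have hvol : volume (Set.Icc (u n) (u n + δ)) = ENNReal.ofReal δ := by
      rw [Real.volume_Icc]; congr 1; ring
    have hsub : Set.Icc (u n) (u n + δ) ⊆ Set.Ici (0:ℝ) := fun x hx =>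
      le_trans (hupos n) hx.1
    have h := setIntegral_ge_of_const_le_real (μ := volume) hmeas
      (by rw [hvol]; exact ENNReal.ofReal_ne_top)
      (fun x hx => hs₀min (hmem n x hx))
      (hint.mono_set hsub)
    rw [Measure.real, hvol, ENNReal.toReal_ofReal hδ.le] at h
    exact h
  -- sum over N disjoint intervals
  have hkey : ∀ N : ℕ, (N : ℝ) * (c * δ) ≤ ∫ t in Set.Ici (0:ℝ), (φ (ψ t)) ^ 2 := by
    intro N
    set S : Set ℝ := ⋃ n ∈ Finset.range N, Set.Icc (u n) (u n + δ) with hSdef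
    have hdisj : Set.Pairwise ↑(Finset.range N)
        (Function.onFun Disjoint fun n => Set.Icc (u n) (u n + δ)) := by
      intro m hm n hn hmn
      have key : ∀ a b : ℕ, a < b →
          Disjoint (Set.Icc (u a) (u a + δ)) (Set.Icc (u b) (u b + δ)) := by
        intro a b hab
        have := humono a b hab
        rw [Set.disjoint_left]
        intro x hx hx'
        have := hx.2; have := hx'.1
        linarith
      rcases lt_or_gt_of_ne hmn with h | h
      · exact key m n h
      · exact (key n m h).symm
    have heq : ∫ t in S, (φ (ψ t)) ^ 2 =
        ∑ n ∈ Finset.range N, ∫ t in Set.Icc (u n) (u n + δ), (φ (ψ t)) ^ 2 := by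
      apply integral_biUnion_finset
      · intro n _; exact measurableSet_Icc
      · exact hdisj
      · intro n _
        exact hint.mono_set (fun x hx => le_trans (hupos n) hx.1)
    have hSsub : S ⊆ Set.Ici (0:ℝ) := by
      intro x hx
      simp only [hSdef, Set.mem_iUnion] at hx
      obtain ⟨n, _, hn⟩ := hx
      exact le_trans (hupos n) hn.1
    have hmono : ∫ t in S, (φ (ψ t)) ^ 2 ≤ ∫ t in Set.Ici (0:ℝ), (φ (ψ t)) ^ 2 := by
      apply setIntegral_mono_set hint
      · filter_upwards with x using sq_nonneg _
      · exact Filter.Eventually.of_forall hSsub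
    calc (N : ℝ) * (c * δ) = ∑ _n ∈ Finset.range N, (c * δ) := by
          rw [Finset.sum_const, Finset.card_range, nsmul_eq_mul]
      _ ≤ ∑ n ∈ Finset.range N, ∫ t in Set.Icc (u n) (u n + δ), (φ (ψ t)) ^ 2 :=
          Finset.sum_le_sum (fun n _ => hbelow n)
      _ = ∫ t in S, (φ (ψ t)) ^ 2 := heq.symm
      _ ≤ _ := hmono
  -- contradiction
  obtain ⟨N, hN⟩ := exists_nat_gt ((∫ t in Set.Ici (0:ℝ), (φ (ψ t)) ^ 2) / (c * δ))
  have hcδ : 0 < c * δ := mul_pos hc hδ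
  have := hkey N
  rw [div_lt_iff₀ hcδ] at hN
  linarith
end

section
/- Let θ ∈ ℝᵈ, let Γ be a symmetric positive-definite real d×d matrix, let K > 0 and D > 0, let α, w : [0,∞) → ℝᵈ and e : [0,∞) → ℝ be continuous, let θ̂ : [0,∞) → ℝᵈ be differentiable with θ̂'(t) = Γ(e(t)α(t) − w(t)), and let ψ : [0,∞) → ℝ be differentiable with ψ'(t) = −Kψ(t) + e(t) for all t ≥ 0. Assume for all t ≥ 0: e(t)·(α(t)ᵀ(θ̂(t) − θ)) ≤ 0, |e(t)| ≤ D·|α(t)ᵀ(θ̂(t) − θ)|, and (θ̂(t) − θ)ᵀ w(t) ≥ 0. Then for every t ≥ 0: |ψ(t)| ≤ |ψ(0)|·e^{−Kt} + (1/2)·√( (D/K)·(θ̂(0) − θ)ᵀΓ⁻¹(θ̂(0) − θ) ). -/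
open Matrix

private lemma aux_amgm {x P Q : ℝ} (hP : 0 < P) (hQ : 0 ≤ Q)
    (h : ∀ a > 0, x ≤ a * P + Q / a) : x ≤ 2 * Real.sqrt (P * Q) := by
  rcases eq_or_lt_of_le hQ with hQ0 | hQpos
  · have hx : x ≤ 0 := by
      by_contra hx
      push_neg at hx
      have := h (x / (2 * P)) (by positivity)
      rw [← hQ0] at this
      have : x ≤ x / (2 * P) * P := by simpa using this
      have hhalf : x / (2 * P) * P = x / 2 := by field_simp
      nlinarith
    have : Real.sqrt (P * Q) = 0 := by rw [← hQ0]; simp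
    rw [this]; linarith
  · have ha : (0:ℝ) < Real.sqrt Q / Real.sqrt P := by positivity
    have hsP := Real.sq_sqrt hP.le
    have hsQ := Real.sq_sqrt hQpos.le
    have hP' : (0:ℝ) < Real.sqrt P := Real.sqrt_pos.2 hP
    have hQ' : (0:ℝ) < Real.sqrt Q := Real.sqrt_pos.2 hQpos
    have := h _ ha
    have h1 : Real.sqrt Q / Real.sqrt P * P = Real.sqrt P * Real.sqrt Q := by
      field_simp; nlinarith
    have h2 : Q / (Real.sqrt Q / Real.sqrt P) = Real.sqrt P * Real.sqrt Q := by
      rw [div_div_eq_mul_div]; field_simp; nlinarith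
    rw [h1, h2, ← Real.sqrt_mul hP.le] at this
    linarith

/-- property P6: with linear feedback `φ(ψ) = Kψ`, the error
model `ψ̇ = −Kψ + e` together with the adaptation law `θ̂' = Γ(e·α − w)`,
the monotonicity/growth conditions on `e` and the sign condition on `w`,
yields `|ψ(t)| ≤ |ψ(0)|·e^{−Kt} + (1/2)·√((D/K)·(θ̂(0) − θ)ᵀΓ⁻¹(θ̂(0) − θ))`. -/
theorem statement9 {d : ℕ} (θ : Fin d → ℝ)
    (Γ : Matrix (Fin d) (Fin d) ℝ) (hΓ : Γ.PosDef)
    (K D : ℝ) (hK : 0 < K) (hD : 0 < D)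
    (α w : ℝ → (Fin d → ℝ)) (e : ℝ → ℝ)
    (hα : ContinuousOn α (Set.Ici 0)) (hw : ContinuousOn w (Set.Ici 0))
    (he : ContinuousOn e (Set.Ici 0))
    (θhat : ℝ → (Fin d → ℝ))
    (hθhat : ∀ t ≥ (0:ℝ), HasDerivAt θhat (Γ *ᵥ (e t • α t - w t)) t)
    (ψ : ℝ → ℝ)
    (hψ : ∀ t ≥ (0:ℝ), HasDerivAt ψ (-K * ψ t + e t) t)
    (hmono : ∀ t ≥ (0:ℝ), e t * (α t ⬝ᵥ (θhat t - θ)) ≤ 0)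
    (hgrowth : ∀ t ≥ (0:ℝ), |e t| ≤ D * |α t ⬝ᵥ (θhat t - θ)|)
    (hres : ∀ t ≥ (0:ℝ), 0 ≤ (θhat t - θ) ⬝ᵥ w t) :
    ∀ t ≥ (0:ℝ), |ψ t| ≤ |ψ 0| * Real.exp (-K * t) +
      (1 / 2) * Real.sqrt ((D / K) * ((θhat 0 - θ) ⬝ᵥ (Γ⁻¹ *ᵥ (θhat 0 - θ)))) := by
  intro t ht
  set Δ : ℝ → Fin d → ℝ := fun s => θhat s - θ with hΔdef
  have hΔ : ∀ s ≥ (0:ℝ), HasDerivAt Δ (Γ *ᵥ (e s • α s - w s)) s :=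
    fun s hs => (hθhat s hs).sub_const θ
  have hinv : ∀ u : Fin d → ℝ, Γ⁻¹ *ᵥ (Γ *ᵥ u) = u := by
    intro u
    rw [Matrix.mulVec_mulVec, Matrix.nonsing_inv_mul Γ (isUnit_iff_ne_zero.mpr hΓ.det_pos.ne'),
      Matrix.one_mulVec]
  have hsymdot : ∀ x y : Fin d → ℝ, x ⬝ᵥ (Γ⁻¹ *ᵥ y) = y ⬝ᵥ (Γ⁻¹ *ᵥ x) := by
    intro x y
    have hsym : (Γ⁻¹)ᵀ = Γ⁻¹ := by
      have := hΓ.inv.isHermitian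
      simpa [Matrix.IsHermitian, Matrix.conjTranspose_eq_transpose_of_trivial] using this
    rw [Matrix.dotProduct_mulVec, ← Matrix.mulVec_transpose, hsym, dotProduct_comm]
  set V : ℝ → ℝ := fun s => Δ s ⬝ᵥ (Γ⁻¹ *ᵥ Δ s) with hVdef
  have hVnonneg : ∀ s, 0 ≤ V s := by
    intro s
    have := hΓ.inv.posSemidef.dotProduct_mulVec_nonneg (Δ s)
    simpa using this
  -- derivative of V
  have hV : ∀ s ≥ (0:ℝ), HasDerivAt V
      (2 * (e s * (α s ⬝ᵥ Δ s)) - 2 * (Δ s ⬝ᵥ w s)) s := by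
    intro s hs
    have h := hΔ s hs
    set Δ' : Fin d → ℝ := Γ *ᵥ (e s • α s - w s) with hΔ'def
    have hc : ∀ i, HasDerivAt (fun r => Δ r i) (Δ' i) s := fun i => hasDerivAt_pi.1 h i
    have hB : ∀ i, HasDerivAt (fun r => (Γ⁻¹ *ᵥ Δ r) i) ((Γ⁻¹ *ᵥ Δ') i) s := by
      intro i
      simp only [Matrix.mulVec, dotProduct]
      exact HasDerivAt.fun_sum (fun j _ => (hc j).const_mul (Γ⁻¹ i j))
    have hder : HasDerivAt (fun r => ∑ i, Δ r i * (Γ⁻¹ *ᵥ Δ r) i)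
        (∑ i, (Δ' i * (Γ⁻¹ *ᵥ Δ s) i + Δ s i * (Γ⁻¹ *ᵥ Δ') i)) s :=
      HasDerivAt.fun_sum (fun i _ => (hc i).mul (hB i))
    have hVd : HasDerivAt V (Δ' ⬝ᵥ (Γ⁻¹ *ᵥ Δ s) + Δ s ⬝ᵥ (Γ⁻¹ *ᵥ Δ')) s := by
      simpa [hVdef, dotProduct, Finset.sum_add_distrib] using hder
    have heq : Δ' ⬝ᵥ (Γ⁻¹ *ᵥ Δ s) + Δ s ⬝ᵥ (Γ⁻¹ *ᵥ Δ') =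
        2 * (e s * (α s ⬝ᵥ Δ s)) - 2 * (Δ s ⬝ᵥ w s) := by
      rw [hsymdot (Δ') (Δ s), hΔ'def, hinv]
      simp [dotProduct_sub, dotProduct_smul, dotProduct_comm (α s) (Δ s),
        smul_eq_mul]
      ring
    rw [heq] at hVd
    exact hVd
  -- continuity facts
  have hΔcont : ContinuousOn Δ (Set.Ici 0) :=
    fun s hs => ((hΔ s hs).continuousAt).continuousWithinAt
  have hdotcont : ContinuousOn (fun s => α s ⬝ᵥ Δ s) (Set.Ici 0) := by
    apply continuousOn_finset_sum
    intro i _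
    exact (((continuous_apply i).comp_continuousOn hα)).mul
      (((continuous_apply i).comp_continuousOn hΔcont))
  have hdotwcont : ContinuousOn (fun s => Δ s ⬝ᵥ w s) (Set.Ici 0) := by
    apply continuousOn_finset_sum
    intro i _
    exact (((continuous_apply i).comp_continuousOn hΔcont)).mul
      (((continuous_apply i).comp_continuousOn hw))
  have huIcc : Set.uIcc (0:ℝ) t = Set.Icc 0 t := Set.uIcc_of_le ht
  have hsubset : Set.Icc (0:ℝ) t ⊆ Set.Ici 0 := fun s hs => hs.1
  -- FTC for V
  have hV'cont : ContinuousOn (fun s => 2 * (e s * (α s ⬝ᵥ Δ s)) - 2 * (Δ s ⬝ᵥ w s))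
      (Set.Icc 0 t) :=
    (((continuousOn_const.mul (he.mul hdotcont)).sub
      (continuousOn_const.mul hdotwcont))).mono hsubset
  have hV'int : IntervalIntegrable (fun s => 2 * (e s * (α s ⬝ᵥ Δ s)) - 2 * (Δ s ⬝ᵥ w s))
      MeasureTheory.volume 0 t := (hV'cont.mono (by rw [huIcc])).intervalIntegrable
  have hVftc : ∫ s in (0:ℝ)..t, (2 * (e s * (α s ⬝ᵥ Δ s)) - 2 * (Δ s ⬝ᵥ w s)) = V t - V 0 :=
    intervalIntegral.integral_eq_sub_of_hasDerivAt
      (fun s hs => hV s (hsubset (huIcc ▸ hs))) hV'int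
  -- bound on \int e^2
  set I : ℝ := ∫ s in (0:ℝ)..t, (e s)^2 with hIdef
  have hecont : ContinuousOn (fun s => (e s)^2) (Set.Icc 0 t) := (he.mono hsubset).pow 2
  have heint : IntervalIntegrable (fun s => (e s)^2) MeasureTheory.volume 0 t :=
    (hecont.mono huIcc.subset).intervalIntegrable
  have heint' : IntervalIntegrable (fun s => (2/D)*(e s)^2) MeasureTheory.volume 0 t :=
    heint.const_mul _
  have hpt : ∀ s ∈ Set.Icc (0:ℝ) t,
      (2/D)*(e s)^2 ≤ -(2 * (e s * (α s ⬝ᵥ Δ s)) - 2 * (Δ s ⬝ᵥ w s)) := by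
    intro s hs
    have hs0 : (0:ℝ) ≤ s := hs.1
    have h1 := hmono s hs0
    have h2 := hgrowth s hs0
    have h3 := hres s hs0
    set A := α s ⬝ᵥ Δ s with hA
    have h1' : e s * A ≤ 0 := h1
    have h4 : |e s * A| = -(e s * A) := abs_of_nonpos h1'
    have h5 : |e s| * |A| = |e s * A| := (abs_mul _ _).symm
    have key : 2*(e s)^2 ≤ D * (-(2 * (e s * A) - 2 * (Δ s ⬝ᵥ w s))) := by
      nlinarith [sq_abs (e s), abs_nonneg (e s), abs_nonneg A,
        mul_le_mul_of_nonneg_left h2 (abs_nonneg (e s))]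
    rw [div_mul_eq_mul_div, div_le_iff₀ hD]
    nlinarith
  have hIle : I ≤ D/2 * V 0 := by
    have hm := intervalIntegral.integral_mono_on ht heint' hV'int.neg hpt
    simp only [Pi.neg_apply] at hm
    rw [intervalIntegral.integral_neg, hVftc, intervalIntegral.integral_const_mul] at hm
    have hVt := hVnonneg t
    have : 2/D * I ≤ V 0 := by linarith
    rw [div_mul_eq_mul_div, div_le_iff₀ hD] at this
    nlinarith
  -- variation of parameters for ψ
  have hu : ∀ s ≥ (0:ℝ), HasDerivAt (fun r => Real.exp (K*r) * ψ r)
      (Real.exp (K*s) * e s) s := by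
    intro s hs
    have hexp : HasDerivAt (fun r => Real.exp (K*r)) (Real.exp (K*s) * K) s := by
      simpa using ((hasDerivAt_id s).const_mul K).exp
    have := hexp.mul (hψ s hs)
    refine this.congr_deriv ?_
    ring
  have hJcont : ContinuousOn (fun s => Real.exp (K*s) * e s) (Set.Icc 0 t) :=
    ((Real.continuous_exp.comp (continuous_const.mul continuous_id)).continuousOn).mul
      (he.mono hsubset)
  have hJint : IntervalIntegrable (fun s => Real.exp (K*s) * e s) MeasureTheory.volume 0 t :=
    (hJcont.mono huIcc.subset).intervalIntegrable
  set J : ℝ := ∫ s in (0:ℝ)..t, Real.exp (K*s) * e s with hJdef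
  have hJftc : J = Real.exp (K*t) * ψ t - ψ 0 := by
    have := intervalIntegral.integral_eq_sub_of_hasDerivAt
      (fun s hs => hu s (hsubset (huIcc ▸ hs))) hJint
    simpa [hJdef] using this
  have hψt : ψ t = Real.exp (-(K*t)) * (ψ 0 + J) := by
    have hne : Real.exp (K*t) ≠ 0 := (Real.exp_pos _).ne'
    rw [Real.exp_neg]
    field_simp
    linarith [hJftc]
  -- |J| bound via AM-GM for each a > 0
  have hexpint : ∫ s in (0:ℝ)..t, Real.exp (2*K*s) = (Real.exp (2*K*t) - 1)/(2*K) := by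
    have hd : ∀ s ∈ Set.uIcc (0:ℝ) t,
        HasDerivAt (fun r => Real.exp (2*K*r)/(2*K)) (Real.exp (2*K*s)) s := by
      intro s _
      have h := (((hasDerivAt_id s).const_mul (2*K)).exp).div_const (2*K)
      have hne : (2*K) ≠ 0 := by positivity
      refine h.congr_deriv ?_
      simp only [id, mul_one]
      field_simp
    rw [intervalIntegral.integral_eq_sub_of_hasDerivAt hd
      ((Real.continuous_exp.comp (continuous_const.mul continuous_id)).intervalIntegrable 0 t)]
    simp [sub_div]
  have hexpint2 : IntervalIntegrable (fun s => Real.exp (2*K*s)) MeasureTheory.volume 0 t :=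
    (Real.continuous_exp.comp (continuous_const.mul continuous_id)).intervalIntegrable 0 t
  have hJbound : ∀ a > (0:ℝ), |J| ≤ a/2 * (Real.exp (2*K*t)/(2*K)) + 1/(2*a) * (D/2 * V 0) := by
    intro a ha
    have habs : |J| ≤ ∫ s in (0:ℝ)..t, |Real.exp (K*s) * e s| :=
      intervalIntegral.abs_integral_le_integral_abs ht
    have habsint : IntervalIntegrable (fun s => |Real.exp (K*s) * e s|)
        MeasureTheory.volume 0 t := hJint.abs
    have hrhsint : IntervalIntegrable (fun s => a/2 * Real.exp (2*K*s) + 1/(2*a) * (e s)^2)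
        MeasureTheory.volume 0 t := (hexpint2.const_mul _).add (heint.const_mul _)
    have hptw : ∀ s ∈ Set.Icc (0:ℝ) t,
        |Real.exp (K*s) * e s| ≤ a/2 * Real.exp (2*K*s) + 1/(2*a) * (e s)^2 := by
      intro s _
      have hx : (0:ℝ) ≤ Real.exp (K*s) := (Real.exp_pos _).le
      have h2 : Real.exp (2*K*s) = Real.exp (K*s)^2 := by
        rw [show 2*K*s = K*s + K*s by ring, Real.exp_add]; ring
      have key : 2*a*(Real.exp (K*s) * |e s|) ≤ a^2 * Real.exp (K*s)^2 + |e s|^2 := by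
        nlinarith [sq_nonneg (a * Real.exp (K*s) - |e s|)]
      have h6 : Real.exp (K*s) * |e s| ≤ a/2 * Real.exp (K*s)^2 + 1/(2*a) * |e s|^2 := by
        rw [show a/2 * Real.exp (K*s)^2 + 1/(2*a) * |e s|^2
            = (a^2 * Real.exp (K*s)^2 + |e s|^2)/(2*a) by field_simp]
        rw [le_div_iff₀ (by positivity)]
        nlinarith
      calc |Real.exp (K*s) * e s| = Real.exp (K*s) * |e s| := by
            rw [abs_mul, abs_of_nonneg hx]
        _ ≤ a/2 * Real.exp (K*s)^2 + 1/(2*a) * |e s|^2 := h6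
        _ = a/2 * Real.exp (2*K*s) + 1/(2*a) * (e s)^2 := by rw [h2, sq_abs]
    have hm := intervalIntegral.integral_mono_on ht habsint hrhsint hptw
    rw [intervalIntegral.integral_add (hexpint2.const_mul _) (heint.const_mul _),
      intervalIntegral.integral_const_mul, intervalIntegral.integral_const_mul, hexpint] at hm
    rw [← hIdef] at hm
    have hE : (Real.exp (2*K*t) - 1)/(2*K) ≤ Real.exp (2*K*t)/(2*K) :=
      (div_le_div_iff_of_pos_right (by positivity)).mpr (by linarith)
    have hterm1 : a/2 * ((Real.exp (2*K*t) - 1)/(2*K)) ≤ a/2 * (Real.exp (2*K*t)/(2*K)) :=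
      mul_le_mul_of_nonneg_left hE (by positivity)
    have hterm2 : 1/(2*a) * I ≤ 1/(2*a) * (D/2 * V 0) :=
      mul_le_mul_of_nonneg_left hIle (by positivity)
    linarith
  -- conclude via the AM-GM optimization lemma
  set E : ℝ := Real.exp (K*t) with hEdef
  have hEpos : 0 < E := Real.exp_pos _
  have hE2 : Real.exp (2*K*t) = E^2 := by
    rw [hEdef, sq, ← Real.exp_add]
    ring_nf
  have hEm : Real.exp (-(K*t)) = E⁻¹ := by rw [hEdef, Real.exp_neg]
  have hV0 : 0 ≤ V 0 := hVnonneg 0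
  have hx : ∀ a > (0:ℝ), E⁻¹ * |J| ≤ a * (E/(4*K)) + (E⁻¹ * (D * V 0) / 4) / a := by
    intro a ha
    have hb := hJbound a ha
    have hm := mul_le_mul_of_nonneg_left hb (inv_pos.mpr hEpos).le
    calc E⁻¹ * |J| ≤ E⁻¹ * (a/2 * (Real.exp (2*K*t)/(2*K)) + 1/(2*a) * (D/2 * V 0)) := hm
      _ = a * (E/(4*K)) + (E⁻¹ * (D * V 0) / 4) / a := by
          rw [hE2]; field_simp; ring
  have hfin : E⁻¹ * |J| ≤ 2 * Real.sqrt ((E/(4*K)) * (E⁻¹ * (D * V 0) / 4)) :=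
    aux_amgm (by positivity) (by positivity) hx
  have hPQ : (E/(4*K)) * (E⁻¹ * (D * V 0) / 4) = (1/4:ℝ)^2 * (D/K * V 0) := by
    field_simp
  have hsq : Real.sqrt ((1/4:ℝ)^2 * (D/K * V 0)) = 1/4 * Real.sqrt (D/K * V 0) := by
    rw [Real.sqrt_mul (by positivity), Real.sqrt_sq (by norm_num)]
  rw [hPQ, hsq] at hfin
  have hfin' : E⁻¹ * |J| ≤ 1/2 * Real.sqrt (D/K * V 0) := by linarith
  have hV0eq : V 0 = (θhat 0 - θ) ⬝ᵥ (Γ⁻¹ *ᵥ (θhat 0 - θ)) := rfl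
  have hexpeq : Real.exp (-K * t) = E⁻¹ := by rw [neg_mul, hEm]
  calc |ψ t| = |Real.exp (-(K*t)) * (ψ 0 + J)| := by rw [hψt]
    _ = E⁻¹ * |ψ 0 + J| := by rw [abs_mul, hEm, abs_of_nonneg (inv_pos.mpr hEpos).le]
    _ ≤ E⁻¹ * (|ψ 0| + |J|) :=
        mul_le_mul_of_nonneg_left (abs_add_le _ _) (inv_pos.mpr hEpos).le
    _ = |ψ 0| * E⁻¹ + E⁻¹ * |J| := by ring
    _ ≤ |ψ 0| * Real.exp (-K * t) + 1/2 * Real.sqrt (D/K * V 0) := by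
        rw [hexpeq]; linarith
    _ = |ψ 0| * Real.exp (-K * t) +
        (1/2) * Real.sqrt ((D/K) * ((θhat 0 - θ) ⬝ᵥ (Γ⁻¹ *ᵥ (θhat 0 - θ)))) := by
        rw [← hV0eq]
end

section
/- Let γ, D₁, L, δ > 0, let a : [0,∞) → ℝ be continuous and persistently exciting with constants L, δ (i.e. ∫ₜ^{t+L} a(τ)² dτ ≥ δ for every t ≥ 0), let κ : [0,∞) → ℝ be continuous with κ(t) ≥ D₁ for all t ≥ 0, and let θ̃ : [0,∞) → ℝ be differentiable with θ̃'(t) = −γ·κ(t)·a(t)²·θ̃(t) for all t ≥ 0. Then for every t ≥ 0: |θ̃(t)| ≤ e^{γD₁δ} · e^{−(γD₁δ/L)·t} · |θ̃(0)|. -/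
open intervalIntegral

/-- scalar-parameter case of property P7: if the regressor `a`
is persistently exciting with constants `L, δ` and `κ(t) ≥ D₁ > 0`, then the
parametric error governed by `θ̃' = −γ·κ(t)·a(t)²·θ̃` satisfies
`|θ̃(t)| ≤ e^{γD₁δ}·e^{−(γD₁δ/L)t}·|θ̃(0)|`. -/
theorem statement11 (γ D₁ L δ : ℝ) (hγ : 0 < γ) (hD₁ : 0 < D₁)
    (hL : 0 < L) (hδ : 0 < δ)
    (a : ℝ → ℝ) (ha : ContinuousOn a (Set.Ici 0))
    (hPE : ∀ t ≥ (0:ℝ), δ ≤ ∫ τ in t..(t + L), (a τ) ^ 2)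
    (κ : ℝ → ℝ) (hκc : ContinuousOn κ (Set.Ici 0))
    (hκ : ∀ t ≥ (0:ℝ), D₁ ≤ κ t)
    (θtil : ℝ → ℝ)
    (hθtil : ∀ t ≥ (0:ℝ), HasDerivAt θtil (-(γ * κ t * (a t) ^ 2 * θtil t)) t) :
    ∀ t ≥ (0:ℝ), |θtil t| ≤
      Real.exp (γ * D₁ * δ) * Real.exp (-(γ * D₁ * δ / L) * t) * |θtil 0| := by
  have hmax : Continuous (fun t : ℝ => max t 0) := continuous_id.max continuous_const
  set a' : ℝ → ℝ := fun t => a (max t 0) with ha'def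
  set κ' : ℝ → ℝ := fun t => κ (max t 0) with hκ'def
  have ha' : Continuous a' := ha.comp_continuous hmax (fun x => Set.mem_Ici.mpr (le_max_right _ _))
  have hκ' : Continuous κ' := hκc.comp_continuous hmax (fun x => Set.mem_Ici.mpr (le_max_right _ _))
  have ha'eq : ∀ t ≥ (0:ℝ), a' t = a t := fun t ht => by
    simp [ha'def, max_eq_left ht]
  have hκ'eq : ∀ t ≥ (0:ℝ), κ' t = κ t := fun t ht => by
    simp [hκ'def, max_eq_left ht]
  have hκ'ge : ∀ t : ℝ, D₁ ≤ κ' t := fun t => hκ _ (le_max_right _ _)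
  set f : ℝ → ℝ := fun t => γ * κ' t * (a' t) ^ 2 with hfdef
  have hf : Continuous f := (continuous_const.mul hκ').mul (ha'.pow 2)
  set F : ℝ → ℝ := fun t => ∫ τ in (0:ℝ)..t, f τ with hFdef
  have hFd : ∀ t : ℝ, HasDerivAt F (f t) t := fun t =>
    integral_hasDerivAt_right (hf.intervalIntegrable _ _)
      (hf.stronglyMeasurableAtFilter _ _) hf.continuousAt
  -- g = θtil * exp F is constant on [0, ∞)
  set g : ℝ → ℝ := fun t => θtil t * Real.exp (F t) with hgdef
  have hgd : ∀ t ≥ (0:ℝ), HasDerivAt g 0 t := by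
    intro t ht
    have h1 := (hθtil t ht).mul ((hFd t).exp)
    have : -(γ * κ t * a t ^ 2 * θtil t) * Real.exp (F t) +
        θtil t * (Real.exp (F t) * f t) = 0 := by
      rw [hfdef]
      simp only [ha'eq t ht, hκ'eq t ht]
      ring
    rwa [this] at h1
  have hgconst : ∀ t ≥ (0:ℝ), g t = g 0 := by
    intro t ht
    have := constant_of_has_deriv_right_zero (f := g) (a := 0) (b := t)
      (fun x hx => (hgd x hx.1).continuousAt.continuousWithinAt)
      (fun x hx => ((hgd x hx.1).hasDerivWithinAt))
    exact this t ⟨ht, le_refl t⟩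
  have hθeq : ∀ t ≥ (0:ℝ), θtil t = θtil 0 * Real.exp (-(F t)) := by
    intro t ht
    have h0 : g 0 = θtil 0 := by simp [hgdef, hFdef]
    have h := hgconst t ht
    rw [h0] at h
    have := congrArg (· * Real.exp (-(F t))) h
    simpa [hgdef, mul_assoc, ← Real.exp_add] using this
  -- lower bound on F t
  have hPE' : ∀ t ≥ (0:ℝ), δ ≤ ∫ τ in t..(t + L), (a' τ) ^ 2 := by
    intro t ht
    have : ∫ τ in t..(t + L), (a' τ) ^ 2 = ∫ τ in t..(t + L), (a τ) ^ 2 := by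
      apply intervalIntegral.integral_congr
      intro x hx
      rw [Set.uIcc_of_le (by linarith)] at hx
      show a' x ^ 2 = a x ^ 2
      rw [ha'eq x (le_trans ht hx.1)]
    rw [this]; exact hPE t ht
  have hint : ∀ u v : ℝ, IntervalIntegrable (fun τ => (a' τ)^2) MeasureTheory.volume u v :=
    fun u v => ((ha'.pow 2)).intervalIntegrable u v
  have hkey : ∀ n : ℕ, (n : ℝ) * δ ≤ ∫ τ in (0:ℝ)..(n * L), (a' τ) ^ 2 := by
    intro n
    induction n with
    | zero => simp
    | succ n ih =>
      have hsplit : ∫ τ in (0:ℝ)..((n:ℝ) * L + L), (a' τ) ^ 2 =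
          (∫ τ in (0:ℝ)..((n:ℝ) * L), (a' τ) ^ 2) +
          ∫ τ in ((n:ℝ) * L)..((n:ℝ) * L + L), (a' τ) ^ 2 :=
        (intervalIntegral.integral_add_adjacent_intervals (hint _ _) (hint _ _)).symm
      have hn0 : (0:ℝ) ≤ (n:ℝ) * L := by positivity
      have := hPE' ((n:ℝ) * L) hn0
      push_cast
      have hc : ((n:ℝ) + 1) * L = (n:ℝ) * L + L := by ring
      rw [add_mul, one_mul, hc, hsplit]
      linarith
  intro t ht
  set n : ℕ := ⌊t / L⌋₊ with hndef
  have hnle : (n : ℝ) * L ≤ t := by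
    have := Nat.floor_le (by positivity : (0:ℝ) ≤ t / L)
    calc (n:ℝ) * L ≤ (t / L) * L := by nlinarith
    _ = t := by field_simp
  have hnge : t / L - 1 ≤ (n : ℝ) := by
    have := Nat.lt_floor_add_one (t / L)
    linarith
  have hmono : ∫ τ in (0:ℝ)..((n:ℝ) * L), (a' τ) ^ 2 ≤ ∫ τ in (0:ℝ)..t, (a' τ) ^ 2 := by
    have hsplit : ∫ τ in (0:ℝ)..t, (a' τ) ^ 2 =
        (∫ τ in (0:ℝ)..((n:ℝ)*L), (a' τ) ^ 2) + ∫ τ in ((n:ℝ)*L)..t, (a' τ) ^ 2 :=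
      (intervalIntegral.integral_add_adjacent_intervals (hint _ _) (hint _ _)).symm
    have hpos : 0 ≤ ∫ τ in ((n:ℝ)*L)..t, (a' τ) ^ 2 :=
      intervalIntegral.integral_nonneg hnle (fun x _ => sq_nonneg _)
    linarith
  have hFlb : γ * D₁ * δ * (t / L - 1) ≤ F t := by
    have h1 : ∫ τ in (0:ℝ)..t, γ * D₁ * (a' τ)^2 ≤ F t := by
      apply intervalIntegral.integral_mono_on ht
      · exact (continuous_const.mul (ha'.pow 2)).intervalIntegrable _ _
      · exact hf.intervalIntegrable _ _
      · intro x _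
        have := hκ'ge x
        have h2 : 0 ≤ (a' x)^2 := sq_nonneg _
        show γ * D₁ * a' x ^ 2 ≤ γ * κ' x * a' x ^ 2
        nlinarith [mul_nonneg (mul_nonneg hγ.le (sub_nonneg.mpr this)) h2]
    have h2 : ∫ τ in (0:ℝ)..t, γ * D₁ * (a' τ)^2 = γ * D₁ * ∫ τ in (0:ℝ)..t, (a' τ)^2 := by
      rw [← intervalIntegral.integral_const_mul]
    have h3 : (n:ℝ) * δ ≤ ∫ τ in (0:ℝ)..t, (a' τ)^2 := le_trans (hkey n) hmono
    have h4 : δ * (t / L - 1) ≤ (n:ℝ) * δ := by nlinarith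
    have hγD : 0 < γ * D₁ := by positivity
    nlinarith
  rw [hθeq t ht, abs_mul, Real.abs_exp, mul_comm]
  rw [← Real.exp_add]
  apply mul_le_mul_of_nonneg_right _ (abs_nonneg _)
  apply Real.exp_le_exp.mpr
  have : γ * D₁ * δ + -(γ * D₁ * δ / L) * t = -(γ * D₁ * δ * (t / L - 1)) := by
    field_simp; ring
  rw [this]
  linarith
end

section
/- Let d ∈ ℕ, let Γ be a symmetric positive-definite real d×d matrix, let D ≥ D₁ > 0, M > 0, L > 0, δ > 0. Let α : [0,∞) → ℝᵈ be continuous with ‖α(t)‖ ≤ M for all t ≥ 0 and persistently exciting with constants L, δ, i.e. ∫ₜ^{t+L} α(τ)α(τ)ᵀ dτ ⪰ δ·I (as symmetric matrices) for every t ≥ 0, and let κ : [0,∞) → ℝ be continuous with D₁ ≤ κ(t) ≤ D for all t ≥ 0. Then there exist constants c ≥ 1 and λ > 0 such that every differentiable θ̃ : [0,∞) → ℝᵈ satisfying θ̃'(t) = −κ(t)·Γ·α(t)·α(t)ᵀ·θ̃(t) for all t ≥ 0 obeys ‖θ̃(t)‖ ≤ c·e^{−λt}·‖θ̃(0)‖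 for every t ≥ 0. -/
open Matrix intervalIntegral

section Helpers

lemma dot_self_nonneg' {d : ℕ} (v : Fin d → ℝ) : 0 ≤ v ⬝ᵥ v :=
  Finset.sum_nonneg fun _ _ => mul_self_nonneg _

lemma norm_sq_le_dot {d : ℕ} (v : Fin d → ℝ) : ‖v‖ ^ 2 ≤ v ⬝ᵥ v := by
  have h1 : ‖v‖ ≤ Real.sqrt (v ⬝ᵥ v) := by
    rw [pi_norm_le_iff_of_nonneg (Real.sqrt_nonneg _)]
    intro i
    rw [Real.norm_eq_abs, ← Real.sqrt_sq_eq_abs]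
    apply Real.sqrt_le_sqrt
    have := Finset.single_le_sum (f := fun j => v j * v j)
      (fun j _ => mul_self_nonneg _) (Finset.mem_univ i)
    simpa [dotProduct, sq] using this
  have h2 : (0:ℝ) ≤ ‖v‖ := norm_nonneg v
  nlinarith [Real.sq_sqrt (dot_self_nonneg' v)]

lemma dot_le_card_norm_sq {d : ℕ} (v : Fin d → ℝ) : v ⬝ᵥ v ≤ d * ‖v‖ ^ 2 := by
  have : ∀ i, v i * v i ≤ ‖v‖ ^ 2 := by
    intro i
    have := norm_le_pi_norm v i
    rw [Real.norm_eq_abs] at this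
    have h0 : (0:ℝ) ≤ |v i| := abs_nonneg _
    nlinarith [abs_mul_abs_self (v i)]
  calc v ⬝ᵥ v = ∑ i, v i * v i := rfl
    _ ≤ ∑ _i : Fin d, ‖v‖ ^ 2 := Finset.sum_le_sum fun i _ => this i
    _ = d * ‖v‖ ^ 2 := by simp [Finset.sum_const, nsmul_eq_mul]

lemma dot_pos {d : ℕ} {v : Fin d → ℝ} (hv : v ≠ 0) : 0 < v ⬝ᵥ v := by
  have h1 : 0 < ‖v‖ := norm_pos_iff.mpr hv
  have := norm_sq_le_dot v
  nlinarith

lemma bilin_bound {d : ℕ} (B : Matrix (Fin d) (Fin d) ℝ) (u w : Fin d → ℝ) :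
    |u ⬝ᵥ (B *ᵥ w)| ≤ (∑ i, ∑ j, |B i j|) * ‖u‖ * ‖w‖ := by
  have hu : ∀ i, |u i| ≤ ‖u‖ := fun i => by
    have := norm_le_pi_norm u i; rwa [Real.norm_eq_abs] at this
  have hw : ∀ j, |w j| ≤ ‖w‖ := fun j => by
    have := norm_le_pi_norm w j; rwa [Real.norm_eq_abs] at this
  have hun : (0:ℝ) ≤ ‖u‖ := norm_nonneg _
  have hwn : (0:ℝ) ≤ ‖w‖ := norm_nonneg _
  calc |u ⬝ᵥ (B *ᵥ w)| = |∑ i, ∑ j, u i * (B i j * w j)| := by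
        simp [dotProduct, Matrix.mulVec, Finset.mul_sum]
    _ ≤ ∑ i, ∑ j, |u i * (B i j * w j)| := by
        refine (Finset.abs_sum_le_sum_abs _ _).trans ?_
        exact Finset.sum_le_sum fun i _ => Finset.abs_sum_le_sum_abs _ _
    _ ≤ ∑ i, ∑ j, |B i j| * ‖u‖ * ‖w‖ := by
        refine Finset.sum_le_sum fun i _ => Finset.sum_le_sum fun j _ => ?_
        rw [abs_mul, abs_mul]
        have h1 := hu i; have h2 := hw j
        have h3 : (0:ℝ) ≤ |B i j| := abs_nonneg _
        have h5 : (0:ℝ) ≤ |w j| := abs_nonneg _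
        calc |u i| * (|B i j| * |w j|) ≤ ‖u‖ * (|B i j| * ‖w‖) :=
              mul_le_mul h1 (mul_le_mul_of_nonneg_left h2 h3) (by positivity) hun
          _ = |B i j| * ‖u‖ * ‖w‖ := by ring
    _ = (∑ i, ∑ j, |B i j|) * ‖u‖ * ‖w‖ := by
        simp only [← Finset.sum_mul]

lemma posdef_lower {d : ℕ} (hd : 0 < d) (A : Matrix (Fin d) (Fin d) ℝ) (hA : A.PosDef) :
    ∃ m > 0, ∀ v : Fin d → ℝ, m * (v ⬝ᵥ v) ≤ v ⬝ᵥ (A *ᵥ v) := by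
  have hcont : Continuous fun v : Fin d → ℝ => v ⬝ᵥ (A *ᵥ v) := by
    simp only [dotProduct, Matrix.mulVec]
    fun_prop
  have hcd : Continuous fun v : Fin d → ℝ => v ⬝ᵥ v := by
    simp only [dotProduct]; fun_prop
  set S : Set (Fin d → ℝ) := {v | v ⬝ᵥ v = 1} with hS
  have hclosed : IsClosed S := isClosed_eq hcd continuous_const
  have hbdd : Bornology.IsBounded S := by
    apply Bornology.IsBounded.subset (Metric.isBounded_closedBall (x := (0 : Fin d → ℝ)) (r := 1))
    intro v hv
    simp only [Metric.mem_closedBall, dist_zero_right]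
    have := norm_sq_le_dot v
    rw [Set.mem_setOf_eq] at hv
    nlinarith [norm_nonneg v]
  have hcompact : IsCompact S := Metric.isCompact_of_isClosed_isBounded hclosed hbdd
  have hne : S.Nonempty := by
    refine ⟨Pi.single ⟨0, hd⟩ 1, ?_⟩
    simp [hS, dotProduct, Pi.single_apply]
  obtain ⟨u, huS, hmin'⟩ := hcompact.exists_isMinOn hne hcont.continuousOn
  have hmin : ∀ y ∈ S, u ⬝ᵥ (A *ᵥ u) ≤ y ⬝ᵥ (A *ᵥ y) := fun y hy => hmin' hy
  have hu1 : u ⬝ᵥ u = 1 := huS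
  have hune : u ≠ 0 := by
    intro h; rw [h] at hu1; simp at hu1
  refine ⟨u ⬝ᵥ (A *ᵥ u), hA.dotProduct_mulVec_pos hune, fun v => ?_⟩
  by_cases hv : v = 0
  · simp [hv]
  · set r := Real.sqrt (v ⬝ᵥ v) with hr
    have hvv : 0 < v ⬝ᵥ v := dot_pos hv
    have hrpos : 0 < r := Real.sqrt_pos.mpr hvv
    have hr2 : r ^ 2 = v ⬝ᵥ v := Real.sq_sqrt hvv.le
    have huv : (r⁻¹ • v) ∈ S := by
      rw [hS, Set.mem_setOf_eq, smul_dotProduct, dotProduct_smul]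
      rw [smul_eq_mul, smul_eq_mul]
      field_simp
      nlinarith
    have := hmin _ huv
    rw [smul_dotProduct, Matrix.mulVec_smul, dotProduct_smul,
      smul_eq_mul, smul_eq_mul] at this
    have h2 : (u ⬝ᵥ (A *ᵥ u)) * (v ⬝ᵥ v) ≤ r⁻¹ * (r⁻¹ * (v ⬝ᵥ (A *ᵥ v))) * (v ⬝ᵥ v) :=
      mul_le_mul_of_nonneg_right this hvv.le
    have h3 : r⁻¹ * r⁻¹ * (v ⬝ᵥ v) = 1 := by
      field_simp; nlinarith
    have h4 : r⁻¹ * (r⁻¹ * (v ⬝ᵥ (A *ᵥ v))) * (v ⬝ᵥ v)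
        = (r⁻¹ * r⁻¹ * (v ⬝ᵥ v)) * (v ⬝ᵥ (A *ᵥ v)) := by ring
    rw [h4, h3, one_mul] at h2
    exact h2

lemma integral_abs_sq_le {a b : ℝ} (hab : a ≤ b) {g : ℝ → ℝ}
    (hg : ContinuousOn g (Set.Icc a b)) :
    (∫ τ in a..b, |g τ|) ^ 2 ≤ (b - a) * ∫ τ in a..b, (g τ) ^ 2 := by
  have huIcc : Set.uIcc a b = Set.Icc a b := Set.uIcc_of_le hab
  have hgi : IntervalIntegrable g MeasureTheory.volume a b :=
    (hg.mono huIcc.subset).intervalIntegrable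
  have habsi : IntervalIntegrable (fun τ => |g τ|) MeasureTheory.volume a b := hgi.abs
  have hsqi : IntervalIntegrable (fun τ => (g τ) ^ 2) MeasureTheory.volume a b := by
    apply ContinuousOn.intervalIntegrable
    rw [huIcc]; exact hg.pow 2
  set I := ∫ τ in a..b, |g τ| with hI
  set J := ∫ τ in a..b, (g τ) ^ 2 with hJ
  rcases eq_or_lt_of_le hab with heq | hlt
  · subst heq; simp [hI, hJ]
  · set len := b - a with hlen
    have hlenpos : 0 < len := by linarith
    set r := I / len with hr
    have key : 0 ≤ ∫ τ in a..b, (|g τ| - r) ^ 2 := by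
      apply intervalIntegral.integral_nonneg hab
      intro u _; positivity
    have expand : (∫ τ in a..b, (|g τ| - r) ^ 2) = J - 2 * r * I + r ^ 2 * len := by
      have h1 : ∀ τ, (|g τ| - r) ^ 2 = (g τ) ^ 2 - 2 * r * |g τ| + r ^ 2 := by
        intro τ
        have := sq_abs (g τ)
        nlinarith
      simp_rw [h1]
      rw [intervalIntegral.integral_add (hsqi.sub (habsi.const_mul (2*r)))
        intervalIntegrable_const,
        intervalIntegral.integral_sub hsqi (habsi.const_mul (2*r)),
        intervalIntegral.integral_const_mul, intervalIntegral.integral_const]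
      simp [hlen]
      ring
    rw [expand] at key
    have heq2 : J - 2 * (I/len) * I + (I/len)^2 * len = J - I^2/len := by
      field_simp; ring
    rw [hr, heq2] at key
    have h2 : I ^ 2 / len ≤ J := by linarith
    calc I ^ 2 = (I ^ 2 / len) * len := by field_simp
      _ ≤ J * len := mul_le_mul_of_nonneg_right h2 hlenpos.le
      _ = len * J := by ring

lemma hasDerivAt_dot_s12 {d : ℕ} (c : Fin d → ℝ) {θ : ℝ → (Fin d → ℝ)} {w : Fin d → ℝ} {t : ℝ}
    (h : HasDerivAt θ w t) : HasDerivAt (fun s => c ⬝ᵥ θ s) (c ⬝ᵥ w) t := by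
  rw [hasDerivAt_pi] at h
  have : HasDerivAt (fun s => ∑ i, c i * θ s i) (∑ i, c i * w i) t :=
    HasDerivAt.fun_sum fun i _ => (h i).const_mul (c i)
  simpa [dotProduct] using this

lemma hasDerivAt_mulVec_apply {d : ℕ} (A : Matrix (Fin d) (Fin d) ℝ)
    {θ : ℝ → (Fin d → ℝ)} {w : Fin d → ℝ} {t : ℝ}
    (h : HasDerivAt θ w t) (i : Fin d) :
    HasDerivAt (fun s => (A *ᵥ θ s) i) ((A *ᵥ w) i) t := by
  rw [hasDerivAt_pi] at h
  have : HasDerivAt (fun s => ∑ j, A i j * θ s j) (∑ j, A i j * w j) t :=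
    HasDerivAt.fun_sum fun j _ => (h j).const_mul (A i j)
  simpa [Matrix.mulVec, dotProduct] using this

lemma hasDerivAt_quad {d : ℕ} (A : Matrix (Fin d) (Fin d) ℝ)
    {θ : ℝ → (Fin d → ℝ)} {w : Fin d → ℝ} {t : ℝ} (h : HasDerivAt θ w t) :
    HasDerivAt (fun s => θ s ⬝ᵥ (A *ᵥ θ s)) (w ⬝ᵥ (A *ᵥ θ t) + θ t ⬝ᵥ (A *ᵥ w)) t := by
  have h' := h
  rw [hasDerivAt_pi] at h'
  have hterm : ∀ i : Fin d, HasDerivAt (fun s => θ s i * (A *ᵥ θ s) i)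
      (w i * (A *ᵥ θ t) i + θ t i * (A *ᵥ w) i) t :=
    fun i => (h' i).mul (hasDerivAt_mulVec_apply A h i)
  have : HasDerivAt (fun s => ∑ i, θ s i * (A *ᵥ θ s) i)
      (∑ i, (w i * (A *ᵥ θ t) i + θ t i * (A *ᵥ w) i)) t :=
    HasDerivAt.fun_sum fun i _ => hterm i
  rw [Finset.sum_add_distrib] at this
  simpa [dotProduct] using this

lemma mulVec_dot {d : ℕ} (A : Matrix (Fin d) (Fin d) ℝ) (x z : Fin d → ℝ) :
    (A *ᵥ x) ⬝ᵥ z = x ⬝ᵥ (Aᵀ *ᵥ z) := by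
  rw [dotProduct_comm, Matrix.dotProduct_mulVec, ← Matrix.mulVec_transpose,
    dotProduct_comm]

lemma gamma_dot {d : ℕ} (Γ : Matrix (Fin d) (Fin d) ℝ) (hΓ : Γ.PosDef)
    (x y : Fin d → ℝ) : (Γ *ᵥ x) ⬝ᵥ (Γ⁻¹ *ᵥ y) = x ⬝ᵥ y := by
  have hsym : Γᵀ = Γ := by
    have := hΓ.1.eq
    simpa using this
  have hdet : IsUnit Γ.det := isUnit_iff_ne_zero.mpr hΓ.det_pos.ne'
  calc (Γ *ᵥ x) ⬝ᵥ (Γ⁻¹ *ᵥ y) = x ⬝ᵥ (Γᵀ *ᵥ (Γ⁻¹ *ᵥ y)) := mulVec_dot Γ x _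
    _ = x ⬝ᵥ ((Γ * Γ⁻¹) *ᵥ y) := by rw [hsym, Matrix.mulVec_mulVec]
    _ = x ⬝ᵥ y := by rw [Matrix.mul_nonsing_inv _ hdet, Matrix.one_mulVec]

lemma continuousOn_dot {d : ℕ} {f g : ℝ → (Fin d → ℝ)} {s : Set ℝ}
    (hf : ContinuousOn f s) (hg : ContinuousOn g s) :
    ContinuousOn (fun x => f x ⬝ᵥ g x) s := by
  simp only [dotProduct]
  apply continuousOn_finset_sum
  intro i _
  exact (((continuous_apply i).comp_continuousOn hf)).mul
    ((continuous_apply i).comp_continuousOn hg)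

lemma continuousOn_mulVec {d : ℕ} (A : Matrix (Fin d) (Fin d) ℝ) {g : ℝ → (Fin d → ℝ)}
    {s : Set ℝ} (hg : ContinuousOn g s) :
    ContinuousOn (fun x => A *ᵥ g x) s := by
  rw [continuousOn_pi]
  intro i
  simp only [Matrix.mulVec, dotProduct]
  apply continuousOn_finset_sum
  intro j _
  exact ((continuous_apply j).comp_continuousOn hg).const_smul (A i j)


lemma symm_dot {d : ℕ} {A : Matrix (Fin d) (Fin d) ℝ} (hsym : Aᵀ = A) (x y : Fin d → ℝ) :
    x ⬝ᵥ (A *ᵥ y) = y ⬝ᵥ (A *ᵥ x) := by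
  rw [dotProduct_comm, mulVec_dot, hsym]

end Helpers

set_option maxHeartbeats 2000000

/-- parameter-convergence part of property P7: for a bounded,
persistently exciting regressor `α` (i.e. `∫ₜ^{t+L} ααᵀ ⪰ δI` as quadratic
forms) and a continuous scalar gain `κ(t) ∈ [D₁, D]`, there exist `c ≥ 1` and
`λ > 0` such that every solution of `θ̃' = −κ(t)·Γ·α(t)·α(t)ᵀ·θ̃` satisfies
`‖θ̃(t)‖ ≤ c·e^{−λt}·‖θ̃(0)‖`. -/
theorem statement12 {d : ℕ}
    (Γ : Matrix (Fin d) (Fin d) ℝ) (hΓ : Γ.PosDef)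
    (D D₁ M L δ : ℝ) (hDD₁ : D₁ ≤ D) (hD₁ : 0 < D₁) (hM : 0 < M)
    (hL : 0 < L) (hδ : 0 < δ)
    (α : ℝ → (Fin d → ℝ)) (hαc : ContinuousOn α (Set.Ici 0))
    (hαbd : ∀ t ≥ (0:ℝ), ‖α t‖ ≤ M)
    (hPE : ∀ t ≥ (0:ℝ), ∀ v : Fin d → ℝ,
      δ * (v ⬝ᵥ v) ≤ ∫ τ in t..(t + L), (α τ ⬝ᵥ v) ^ 2)
    (κ : ℝ → ℝ) (hκc : ContinuousOn κ (Set.Ici 0))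
    (hκ : ∀ t ≥ (0:ℝ), D₁ ≤ κ t ∧ κ t ≤ D) :
    ∃ c ≥ (1:ℝ), ∃ lam > (0:ℝ), ∀ θtil : ℝ → (Fin d → ℝ),
      (∀ t ≥ (0:ℝ), HasDerivAt θtil
        (-(κ t • (Γ *ᵥ ((α t ⬝ᵥ θtil t) • α t)))) t) →
      ∀ t ≥ (0:ℝ), ‖θtil t‖ ≤ c * Real.exp (-lam * t) * ‖θtil 0‖ := by
  by_cases hd0 : d = 0
  · subst hd0
    refine ⟨1, le_refl 1, 1, one_pos, fun θtil _ t _ => ?_⟩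
    have h1 : θtil t = 0 := Subsingleton.elim _ _
    have h2 : θtil 0 = 0 := Subsingleton.elim _ _
    rw [h1, h2, norm_zero]
    simp
  have hd : 0 < d := Nat.pos_of_ne_zero hd0
  have hD : 0 < D := lt_of_lt_of_le hD₁ hDD₁
  have hApd : (Γ⁻¹).PosDef := hΓ.inv
  have hAsym : (Γ⁻¹)ᵀ = Γ⁻¹ := by
    have := hApd.1.eq
    simpa using this
  obtain ⟨m, hm, hlow⟩ := posdef_lower hd Γ⁻¹ hApd
  set GA := ∑ i, ∑ j, |(Γ⁻¹) i j| with hGA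
  have hGA0 : 0 ≤ GA := Finset.sum_nonneg fun i _ => Finset.sum_nonneg fun j _ => abs_nonneg _
  set m' := GA + 1 with hm'def
  have hm' : 0 < m' := by positivity
  have hupp : ∀ v : Fin d → ℝ, v ⬝ᵥ (Γ⁻¹ *ᵥ v) ≤ m' * (v ⬝ᵥ v) := by
    intro v
    have h1 := bilin_bound Γ⁻¹ v v
    have h2 := norm_sq_le_dot v
    have h3 := dot_self_nonneg' v
    have h4 := le_abs_self (v ⬝ᵥ (Γ⁻¹ *ᵥ v))
    have h5 : GA * ‖v‖ * ‖v‖ = GA * ‖v‖^2 := by ring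
    have h6 := mul_le_mul_of_nonneg_left h2 hGA0
    linarith
  set G := ∑ i, ∑ j, |Γ i j| with hG
  have hG0 : 0 ≤ G := Finset.sum_nonneg fun i _ => Finset.sum_nonneg fun j _ => abs_nonneg _
  set K := D * M^2 * G with hK
  have hK0 : 0 ≤ K := by positivity
  set C₁ := 2 + 2*L^2*K^2 with hC₁
  have hC₁pos : 0 < C₁ := by positivity
  set μ := 2*D₁*δ/(C₁ * m') with hμ
  have hμpos : 0 < μ := div_pos (by positivity) (mul_pos hC₁pos hm')
  set q := max (1-μ) (1/2 : ℝ) with hq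
  have hqpos : 0 < q := lt_of_lt_of_le (by norm_num) (le_max_right _ _)
  have hqlt : q < 1 := max_lt (by linarith) (by norm_num)
  set lam := -(Real.log q)/(2*L) with hlam
  have hlogq : Real.log q < 0 := Real.log_neg hqpos hqlt
  have hlampos : 0 < lam := div_pos (neg_pos.mpr hlogq) (by linarith)
  set c := max 1 (Real.sqrt (m' * d / (q * m))) with hc
  refine ⟨c, le_max_left _ _, lam, hlampos, fun θtil hθ => ?_⟩
  set w := fun s => -(κ s • (Γ *ᵥ ((α s ⬝ᵥ θtil s) • α s))) with hwdef
  have hθ' : ∀ s ≥ (0:ℝ), HasDerivAt θtil (w s) s := hθ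
  have hθcont : ContinuousOn θtil (Set.Ici 0) :=
    fun s hs => ((hθ' s hs).continuousAt).continuousWithinAt
  set h := fun s => α s ⬝ᵥ θtil s with hhdef
  have hhcont : ContinuousOn h (Set.Ici 0) := continuousOn_dot hαc hθcont
  have hwdot : ∀ (u : Fin d → ℝ) (s : ℝ), u ⬝ᵥ w s = -(κ s * (h s * (u ⬝ᵥ (Γ *ᵥ α s)))) := by
    intro u s
    rw [hwdef]
    simp only [Matrix.mulVec_smul]
    rw [dotProduct_neg, dotProduct_smul, dotProduct_smul]
    simp [smul_eq_mul, hhdef]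
  set V := fun s => θtil s ⬝ᵥ (Γ⁻¹ *ᵥ θtil s) with hVdef
  have hVd : ∀ s ≥ (0:ℝ), HasDerivAt V (-(2 * κ s * (h s)^2)) s := by
    intro s hs
    have hder := hasDerivAt_quad Γ⁻¹ (hθ' s hs)
    have key : w s ⬝ᵥ (Γ⁻¹ *ᵥ θtil s) + θtil s ⬝ᵥ (Γ⁻¹ *ᵥ w s) = -(2 * κ s * (h s)^2) := by
      have e1 : θtil s ⬝ᵥ (Γ⁻¹ *ᵥ w s) = w s ⬝ᵥ (Γ⁻¹ *ᵥ θtil s) := symm_dot hAsym _ _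
      have e2 : w s ⬝ᵥ (Γ⁻¹ *ᵥ θtil s) = -(κ s * (h s * h s)) := by
        have e3 : (Γ *ᵥ α s) ⬝ᵥ (Γ⁻¹ *ᵥ θtil s) = α s ⬝ᵥ θtil s := gamma_dot Γ hΓ _ _
        rw [dotProduct_comm, hwdot (Γ⁻¹ *ᵥ θtil s) s]
        rw [dotProduct_comm (Γ⁻¹ *ᵥ θtil s) (Γ *ᵥ α s), e3]
      rw [e1, e2]; ring
    rw [key] at hder
    exact hder
  have hVcont : ContinuousOn V (Set.Ici 0) :=
    continuousOn_dot hθcont (continuousOn_mulVec _ hθcont)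
  have hVnonneg : ∀ s, 0 ≤ V s := by
    intro s
    have h1 := hlow (θtil s)
    have h2 := mul_nonneg hm.le (dot_self_nonneg' (θtil s))
    linarith only [h1, h2]
  have hVupp : ∀ s, V s ≤ m' * (θtil s ⬝ᵥ θtil s) := fun s => hupp _
  -- the contraction estimate over one excitation window
  have hcontr : ∀ t ≥ (0:ℝ), V (t + L) ≤ q * V t := by
    intro t ht
    have htL : t ≤ t + L := by linarith
    have hsub : Set.Icc t (t+L) ⊆ Set.Ici (0:ℝ) := fun x hx => le_trans ht hx.1
    have huIcc : Set.uIcc t (t+L) = Set.Icc t (t+L) := Set.uIcc_of_le htL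
    have hαcI : ContinuousOn α (Set.Icc t (t+L)) := hαc.mono hsub
    have hκcI : ContinuousOn κ (Set.Icc t (t+L)) := hκc.mono hsub
    have hhcI : ContinuousOn h (Set.Icc t (t+L)) := hhcont.mono hsub
    have hsqint : IntervalIntegrable (fun τ => (h τ)^2) MeasureTheory.volume t (t+L) := by
      apply ContinuousOn.intervalIntegrable; rw [huIcc]; exact hhcI.pow 2
    have habsint : IntervalIntegrable (fun τ => |h τ|) MeasureTheory.volume t (t+L) := by
      apply ContinuousOn.intervalIntegrable; rw [huIcc]; exact hhcI.abs
    set S := ∫ τ in t..(t+L), (h τ)^2 with hSdef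
    set I := ∫ τ in t..(t+L), |h τ| with hIdef
    have hSnn : 0 ≤ S := intervalIntegral.integral_nonneg htL (fun u _ => sq_nonneg _)
    have hInn : 0 ≤ I := intervalIntegral.integral_nonneg htL (fun u _ => abs_nonneg _)
    have hCS : I^2 ≤ L * S := by
      have := integral_abs_sq_le htL hhcI
      have hl : t + L - t = L := by ring
      rw [hl] at this
      exact this
    -- continuity of the Γ-coupled term
    have hGc : ∀ u : Fin d → ℝ, ContinuousOn (fun s => u ⬝ᵥ (Γ *ᵥ α s)) (Set.Icc t (t+L)) :=
      fun u => continuousOn_dot continuousOn_const (continuousOn_mulVec Γ hαcI)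
    -- pointwise domination of the drift integrand
    have hbound : ∀ τ' ∈ Set.Icc t (t+L), ∀ s ∈ Set.Icc t (t+L), |α τ' ⬝ᵥ w s| ≤ K * |h s| := by
      intro τ' hτ' s hs
      rw [hwdot]
      have hb := bilin_bound Γ (α τ') (α s)
      have hbd1 := hαbd τ' (hsub hτ')
      have hbd2 := hαbd s (hsub hs)
      have hκs := hκ s (hsub hs)
      have hn1 : (0:ℝ) ≤ ‖α τ'‖ := norm_nonneg _
      have hn2 : (0:ℝ) ≤ ‖α s‖ := norm_nonneg _
      have habs : |α τ' ⬝ᵥ (Γ *ᵥ α s)| ≤ G * M^2 := by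
        calc |α τ' ⬝ᵥ (Γ *ᵥ α s)| ≤ G * ‖α τ'‖ * ‖α s‖ := hb
          _ = G * (‖α τ'‖ * ‖α s‖) := by ring
          _ ≤ G * (M * M) := by
            have hmm : ‖α τ'‖ * ‖α s‖ ≤ M * M := mul_le_mul hbd1 hbd2 hn2 (hn1.trans hbd1)
            exact mul_le_mul_of_nonneg_left hmm hG0
          _ = G * M^2 := by ring
      rw [abs_neg, abs_mul, abs_mul]
      have hκabs : |κ s| ≤ D := by
        rw [abs_of_nonneg (by linarith [hκs.1] : (0:ℝ) ≤ κ s)]; exact hκs.2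
      have hha : (0:ℝ) ≤ |h s| := abs_nonneg _
      have hcomm : |α τ' ⬝ᵥ (Γ *ᵥ α s)| = |(α τ') ⬝ᵥ (Γ *ᵥ α s)| := rfl
      calc |κ s| * (|h s| * |α τ' ⬝ᵥ (Γ *ᵥ α s)|)
          ≤ D * (|h s| * (G * M^2)) := by
            apply mul_le_mul hκabs _ (by positivity) hD.le
            exact mul_le_mul_of_nonneg_left habs hha
        _ = K * |h s| := by rw [hK]; ring
    -- drift estimate
    have hdrift : ∀ τ' ∈ Set.Icc t (t+L), (α τ' ⬝ᵥ θtil t)^2 ≤ 2*(h τ')^2 + 2*(K*I)^2 := by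
      intro τ' hτ'
      have hττ : t ≤ τ' := hτ'.1
      have hsub2 : Set.Icc t τ' ⊆ Set.Icc t (t+L) := Set.Icc_subset_Icc le_rfl hτ'.2
      have huIcc2 : Set.uIcc t τ' = Set.Icc t τ' := Set.uIcc_of_le hττ
      have hgd : ∀ s ∈ Set.uIcc t τ', HasDerivAt (fun s' => α τ' ⬝ᵥ θtil s') (α τ' ⬝ᵥ w s) s := by
        intro s hs
        rw [huIcc2] at hs
        exact hasDerivAt_dot_s12 (α τ') (hθ' s (hsub (hsub2 hs)).out)
      have hwc : ContinuousOn (fun s => α τ' ⬝ᵥ w s) (Set.Icc t τ') := by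
        apply ContinuousOn.congr (f := fun s => -(κ s * (h s * (α τ' ⬝ᵥ (Γ *ᵥ α s)))))
        · exact (((hκcI.mono hsub2).mul ((hhcI.mono hsub2).mul ((hGc (α τ')).mono hsub2))).neg)
        · intro s _
          exact hwdot (α τ') s
      have hwint : IntervalIntegrable (fun s => α τ' ⬝ᵥ w s) MeasureTheory.volume t τ' := by
        apply ContinuousOn.intervalIntegrable; rw [huIcc2]; exact hwc
      have hFTC : (∫ s in t..τ', α τ' ⬝ᵥ w s) = (α τ' ⬝ᵥ θtil τ') - (α τ' ⬝ᵥ θtil t) :=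
        intervalIntegral.integral_eq_sub_of_hasDerivAt hgd hwint
      have habs1 : |∫ s in t..τ', α τ' ⬝ᵥ w s| ≤ ∫ s in t..τ', |α τ' ⬝ᵥ w s| := by
        exact intervalIntegral.abs_integral_le_integral_abs (μ := MeasureTheory.volume)
          (f := fun s => α τ' ⬝ᵥ w s) (a := t) (b := τ') hττ
      have habsint2 : IntervalIntegrable (fun s => |α τ' ⬝ᵥ w s|) MeasureTheory.volume t τ' :=
        hwint.abs
      have hKhint : IntervalIntegrable (fun s => K * |h s|) MeasureTheory.volume t τ' := by
        apply IntervalIntegrable.const_mul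
        apply habsint.mono_set
        rw [huIcc2, huIcc]
        exact hsub2
      have hstep1 : (∫ s in t..τ', |α τ' ⬝ᵥ w s|) ≤ ∫ s in t..τ', K * |h s| := by
        apply intervalIntegral.integral_mono_on hττ habsint2 hKhint
        intro s hs
        exact hbound τ' hτ' s (hsub2 hs)
      have hstep2 : (∫ s in t..τ', K * |h s|) = K * ∫ s in t..τ', |h s| := by
        exact intervalIntegral.integral_const_mul K _
      have hstep3 : (∫ s in t..τ', |h s|) ≤ I := by
        apply intervalIntegral.integral_mono_interval le_rfl hττ hτ'.2
        · filter_upwards with x using abs_nonneg _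
        · exact habsint
      have hdiff : |(α τ' ⬝ᵥ θtil τ') - (α τ' ⬝ᵥ θtil t)| ≤ K * I := by
        rw [← hFTC]
        calc |∫ s in t..τ', α τ' ⬝ᵥ w s| ≤ ∫ s in t..τ', |α τ' ⬝ᵥ w s| := habs1
          _ ≤ ∫ s in t..τ', K * |h s| := hstep1
          _ = K * ∫ s in t..τ', |h s| := hstep2
          _ ≤ K * I := mul_le_mul_of_nonneg_left hstep3 hK0
      have hhe : α τ' ⬝ᵥ θtil τ' = h τ' := rfl
      rw [hhe] at hdiff
      obtain ⟨hd1, hd2⟩ := abs_le.mp hdiff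
      have e1 : (h τ' - (α τ' ⬝ᵥ θtil t))^2 ≤ (K*I)^2 := sq_le_sq' hd1 hd2
      nlinarith only [e1, sq_nonneg (2 * h τ' - (α τ' ⬝ᵥ θtil t))]
    -- integrate the drift estimate and use persistent excitation
    have hint1 : IntervalIntegrable (fun τ' => (α τ' ⬝ᵥ θtil t)^2) MeasureTheory.volume t (t+L) := by
      apply ContinuousOn.intervalIntegrable; rw [huIcc]
      exact (continuousOn_dot hαcI continuousOn_const).pow 2
    have hint2 : IntervalIntegrable (fun τ' => 2*(h τ')^2 + 2*(K*I)^2) MeasureTheory.volume t (t+L) :=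
      (hsqint.const_mul 2).add intervalIntegrable_const
    have hPEt := hPE t ht (θtil t)
    have hmono : (∫ τ' in t..(t+L), (α τ' ⬝ᵥ θtil t)^2)
        ≤ ∫ τ' in t..(t+L), (2*(h τ')^2 + 2*(K*I)^2) :=
      intervalIntegral.integral_mono_on htL hint1 hint2 hdrift
    have hrhs : (∫ τ' in t..(t+L), (2*(h τ')^2 + 2*(K*I)^2)) = 2*S + 2*(K*I)^2*L := by
      rw [intervalIntegral.integral_add (hsqint.const_mul 2) intervalIntegrable_const,
        intervalIntegral.integral_const_mul, intervalIntegral.integral_const]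
      have hl : t + L - t = L := by ring
      rw [hl]
      simp [smul_eq_mul]
      ring
    have hSlow : δ * (θtil t ⬝ᵥ θtil t) ≤ C₁ * S := by
      have hKI : 2*(K*I)^2*L ≤ 2*K^2*L^2*S := by
        have h8 := mul_le_mul_of_nonneg_left hCS (show (0:ℝ) ≤ 2*L*K^2 by positivity)
        linarith only [h8]
      have : δ * (θtil t ⬝ᵥ θtil t) ≤ 2*S + 2*(K*I)^2*L := by
        calc δ * (θtil t ⬝ᵥ θtil t) ≤ ∫ τ' in t..(t+L), (α τ' ⬝ᵥ θtil t)^2 := hPEt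
          _ ≤ ∫ τ' in t..(t+L), (2*(h τ')^2 + 2*(K*I)^2) := hmono
          _ = 2*S + 2*(K*I)^2*L := hrhs
      rw [hC₁]
      linarith only [this, hKI]
    -- fundamental theorem of calculus for V on the window
    have hVder' : ∀ x ∈ Set.uIcc t (t+L), HasDerivAt V (-(2*κ x*(h x)^2)) x := by
      intro x hx
      rw [huIcc] at hx
      exact hVd x (hsub hx)
    have hV'int : IntervalIntegrable (fun x => -(2*κ x*(h x)^2)) MeasureTheory.volume t (t+L) := by
      apply ContinuousOn.intervalIntegrable; rw [huIcc]
      exact (((continuousOn_const (c := (2:ℝ))).mul hκcI).mul (hhcI.pow 2)).neg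
    have hFTCV : (∫ x in t..(t+L), -(2*κ x*(h x)^2)) = V (t+L) - V t :=
      intervalIntegral.integral_eq_sub_of_hasDerivAt hVder' hV'int
    have hD₁int : IntervalIntegrable (fun x => -(2*D₁*(h x)^2)) MeasureTheory.volume t (t+L) :=
      ((hsqint.const_mul (2*D₁)).neg)
    have hVstep : V (t+L) - V t ≤ -(2*D₁*S) := by
      rw [← hFTCV]
      have hptwise : ∀ x ∈ Set.Icc t (t+L), -(2*κ x*(h x)^2) ≤ -(2*D₁*(h x)^2) := by
        intro x hx
        have h9 := mul_nonneg (sub_nonneg.mpr (hκ x (hsub hx)).1) (sq_nonneg (h x))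
        nlinarith only [h9]
      calc (∫ x in t..(t+L), -(2*κ x*(h x)^2))
          ≤ ∫ x in t..(t+L), -(2*D₁*(h x)^2) :=
            intervalIntegral.integral_mono_on htL hV'int hD₁int hptwise
        _ = -(2*D₁*S) := by
            have : (∫ x in t..(t+L), -(2*D₁*(h x)^2)) = -(2*D₁) * ∫ x in t..(t+L), (h x)^2 := by
              rw [← intervalIntegral.integral_const_mul]
              congr 1; funext x; ring
            rw [this, hSdef]; ring
    have hμS : μ * V t ≤ 2*D₁*S := by
      rw [hμ, div_mul_eq_mul_div, div_le_iff₀ (mul_pos hC₁pos hm')]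
      have p1 := mul_le_mul_of_nonneg_left (hVupp t) hδ.le
      have p2 := mul_le_mul_of_nonneg_left hSlow hm'.le
      have p3 : δ * V t ≤ C₁ * m' * S := by linarith only [p1, p2]
      have p4 := mul_le_mul_of_nonneg_left p3 (show (0:ℝ) ≤ 2*D₁ by linarith only [hD₁])
      linarith only [p4]
    have hfinal : V (t+L) ≤ (1-μ) * V t := by linarith only [hVstep, hμS]
    calc V (t+L) ≤ (1-μ) * V t := hfinal
      _ ≤ q * V t := mul_le_mul_of_nonneg_right (le_max_left _ _) (hVnonneg t)
  -- V is non-increasing on [0, ∞)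
  have hanti : AntitoneOn V (Set.Ici 0) := by
    apply antitoneOn_of_deriv_nonpos (convex_Ici 0) hVcont
    · intro x hx
      rw [interior_Ici] at hx
      exact ((hVd x (le_of_lt hx)).differentiableAt).differentiableWithinAt
    · intro x hx
      rw [interior_Ici] at hx
      rw [(hVd x hx.le).deriv]
      have h9 := mul_nonneg (le_trans hD₁.le (hκ x hx.le).1) (sq_nonneg (h x))
      linarith only [h9]
  -- geometric decay along the grid
  have hiter : ∀ n : ℕ, V (n * L) ≤ q^n * V 0 := by
    intro n
    induction n with
    | zero => simp
    | succ n ih =>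
      have h1 : ((n+1 : ℕ) : ℝ) * L = n*L + L := by push_cast; ring
      rw [h1, pow_succ]
      calc V ((n:ℝ)*L + L) ≤ q * V ((n:ℝ)*L) := hcontr ((n:ℝ)*L) (by positivity)
        _ ≤ q * (q^n * V 0) := mul_le_mul_of_nonneg_left ih hqpos.le
        _ = q^n * q * V 0 := by ring
  -- conclusion
  intro t ht
  set n := Nat.floor (t / L) with hn
  have htL0 : 0 ≤ t / L := by positivity
  have hnL : (n:ℝ) * L ≤ t := by
    have h0 := Nat.floor_le htL0
    calc (n:ℝ)*L ≤ (t/L)*L := mul_le_mul_of_nonneg_right h0 hL.le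
      _ = t := by field_simp
  have h1 : V t ≤ V ((n:ℝ)*L) := hanti (Set.mem_Ici.mpr (by positivity)) (Set.mem_Ici.mpr ht) hnL
  have h2 : V t ≤ q^n * V 0 := h1.trans (hiter n)
  have hq_pow : (q:ℝ)^n = Real.exp ((n:ℝ) * Real.log q) := by
    rw [← Real.log_pow, Real.exp_log (pow_pos hqpos n)]
  have hflo : t / L - 1 ≤ (n:ℝ) := by
    have := Nat.lt_floor_add_one (t / L)
    rw [← hn] at this
    linarith
  have hmul : (n:ℝ) * Real.log q ≤ (t/L - 1) * Real.log q :=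
    mul_le_mul_of_nonpos_right hflo hlogq.le
  have h3 : (q:ℝ)^n ≤ Real.exp ((Real.log q / L) * t) / q := by
    rw [hq_pow]
    calc Real.exp ((n:ℝ) * Real.log q) ≤ Real.exp ((t/L - 1) * Real.log q) :=
          Real.exp_le_exp.mpr hmul
      _ = Real.exp ((Real.log q / L) * t) * Real.exp (-Real.log q) := by
          rw [← Real.exp_add]; congr 1; field_simp; try ring
      _ = Real.exp ((Real.log q / L) * t) / q := by
          rw [Real.exp_neg, Real.exp_log hqpos]; ring
  have hVt : V t ≤ Real.exp ((Real.log q / L) * t) / q * V 0 :=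
    h2.trans (mul_le_mul_of_nonneg_right h3 (hVnonneg 0))
  have ha : m * ‖θtil t‖^2 ≤ V t :=
    le_trans (mul_le_mul_of_nonneg_left (norm_sq_le_dot _) hm.le) (hlow _)
  have hb : V 0 ≤ m' * ((d:ℝ) * ‖θtil 0‖^2) :=
    le_trans (hupp _) (mul_le_mul_of_nonneg_left (dot_le_card_norm_sq _) hm'.le)
  set E := Real.exp (-lam * t) with hE
  have hEpos : 0 < E := Real.exp_pos _
  have hexp2 : Real.exp ((Real.log q / L) * t) = E^2 := by
    rw [hE, sq, ← Real.exp_add, hlam]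
    congr 1
    field_simp
    ring
  set B := ‖θtil 0‖ with hB
  have hBnn : 0 ≤ B := norm_nonneg _
  have hcnn : (0:ℝ) < c := lt_of_lt_of_le one_pos (le_max_left _ _)
  have hqm : (0:ℝ) < q * m := mul_pos hqpos hm
  have hc2' : m' * d ≤ c^2 * (q * m) := by
    have hsq : Real.sqrt (m' * d / (q * m)) ≤ c := le_max_right _ _
    have h0 : (0:ℝ) ≤ m' * d / (q * m) := div_nonneg (by positivity) hqm.le
    have hXc : m' * d / (q * m) ≤ c^2 := by
      nlinarith only [hsq, Real.sq_sqrt h0, Real.sqrt_nonneg (m' * d / (q * m))]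
    rw [div_le_iff₀ hqm] at hXc
    linarith
  -- combine everything
  have step1 : q * (m * ‖θtil t‖^2) ≤ E^2 * (m' * ((d:ℝ) * B^2)) := by
    calc q * (m * ‖θtil t‖^2) ≤ q * V t := mul_le_mul_of_nonneg_left ha hqpos.le
      _ ≤ q * (Real.exp ((Real.log q / L) * t) / q * V 0) :=
          mul_le_mul_of_nonneg_left hVt hqpos.le
      _ = Real.exp ((Real.log q / L) * t) * V 0 := by
          field_simp
      _ = E^2 * V 0 := by rw [hexp2]
      _ ≤ E^2 * (m' * ((d:ℝ) * B^2)) := mul_le_mul_of_nonneg_left hb (sq_nonneg E)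
  have step2 : (q * m) * ‖θtil t‖^2 ≤ (q * m) * ((c * E * B)^2) := by
    have hEB : (0:ℝ) ≤ E^2 * B^2 := by positivity
    have s3 := mul_le_mul_of_nonneg_right hc2' hEB
    linarith only [step1, s3]
  have hfin : ‖θtil t‖^2 ≤ (c * E * B)^2 :=
    le_of_mul_le_mul_left step2 hqm
  have hrhsnn : 0 ≤ c * E * B :=
    mul_nonneg (mul_nonneg hcnn.le hEpos.le) hBnn
  nlinarith only [norm_nonneg (θtil t), hfin, hrhsnn]
end

section
/- Let K, γ, D₁, D, L, δ, M > 0 with D₁ ≤ D and λ := γD₁δ/L < K, and let θ ∈ ℝ. Let a, κ : [0,∞) → ℝ be continuous with |a(t)| ≤ M and D₁ ≤ κ(t) ≤ D for all t ≥ 0, and suppose a is persistently exciting with constants L, δ (i.e. ∫ₜ^{t+L} a(τ)² dτ ≥ δ for every t ≥ 0). Let θ̂, ψ : [0,∞) → ℝ be differentiable and define e(t) := −κ(t)·a(t)·(θ̂(t) − θ). Assume ψ'(t) = −Kψ(t) + e(t) and θ̂'(t) = γ·e(t)·a(t) for all t ≥ 0. Then for every t ≥ 0: (i) |θ̂(t)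 − θ| ≤ e^{γD₁δ}·e^{−λt}·|θ̂(0) − θ|, and (ii) |ψ(t)| ≤ |ψ(0)|·e^{−Kt} + (D·M·e^{γD₁δ}·|θ̂(0) − θ|/(K−λ))·e^{−λt}. -/
open intervalIntegral

/-- scalar-parameter, linear-feedback instance of property P7,
with all constants explicit: under persistent excitation of `a`, the
adaptation law `θ̂' = γ·e·a` with matching error `e = −κ·a·(θ̂ − θ)` and error
model `ψ̇ = −Kψ + e` yields exponential convergence of both the parameter
estimation error and the tracking error. -/
theorem statement14 (K γ D₁ D L δ M : ℝ)
    (hK : 0 < K) (hγ : 0 < γ) (hD₁ : 0 < D₁) (hD : 0 < D) (hL : 0 < L)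
    (hδ : 0 < δ) (hM : 0 < M) (hD₁D : D₁ ≤ D)
    (hlamK : γ * D₁ * δ / L < K)
    (θ : ℝ)
    (a κ : ℝ → ℝ) (hac : ContinuousOn a (Set.Ici 0))
    (hκc : ContinuousOn κ (Set.Ici 0))
    (habd : ∀ t ≥ (0:ℝ), |a t| ≤ M)
    (hκbd : ∀ t ≥ (0:ℝ), D₁ ≤ κ t ∧ κ t ≤ D)
    (hPE : ∀ t ≥ (0:ℝ), δ ≤ ∫ τ in t..(t + L), (a τ) ^ 2)
    (θhat ψ : ℝ → ℝ)
    (e : ℝ → ℝ) (he : ∀ t : ℝ, e t = -(κ t * a t * (θhat t - θ)))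
    (hψ : ∀ t ≥ (0:ℝ), HasDerivAt ψ (-K * ψ t + e t) t)
    (hθhat : ∀ t ≥ (0:ℝ), HasDerivAt θhat (γ * e t * a t) t) :
    ∀ t ≥ (0:ℝ),
      |θhat t - θ| ≤ Real.exp (γ * D₁ * δ) *
          Real.exp (-(γ * D₁ * δ / L) * t) * |θhat 0 - θ| ∧
      |ψ t| ≤ |ψ 0| * Real.exp (-K * t) +
          (D * M * Real.exp (γ * D₁ * δ) * |θhat 0 - θ| / (K - γ * D₁ * δ / L)) *
            Real.exp (-(γ * D₁ * δ / L) * t) := by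
  -- extended continuous versions of a and κ
  set lam : ℝ := γ * D₁ * δ / L with hlam_def
  have hlam_pos : 0 < lam := by positivity
  have hKlam : 0 < K - lam := sub_pos.mpr hlamK
  set ab : ℝ → ℝ := fun s => a (max s 0) with hab_def
  set κb : ℝ → ℝ := fun s => κ (max s 0) with hκb_def
  have habC : Continuous ab :=
    hac.comp_continuous (continuous_id.max continuous_const) fun x => le_max_right x 0
  have hκbC : Continuous κb :=
    hκc.comp_continuous (continuous_id.max continuous_const) fun x => le_max_right x 0
  have hab_eq : ∀ s ≥ (0:ℝ), ab s = a s := fun s hs => by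
    simp [hab_def, max_eq_left hs]
  have hκb_eq : ∀ s ≥ (0:ℝ), κb s = κ s := fun s hs => by
    simp [hκb_def, max_eq_left hs]
  set g : ℝ → ℝ := fun s => γ * (κb s * ab s ^ 2) with hg_def
  have hgC : Continuous g := by continuity
  set G : ℝ → ℝ := fun s => ∫ τ in (0:ℝ)..s, g τ with hG_def
  have hG : ∀ s : ℝ, HasDerivAt G (g s) s := fun s =>
    intervalIntegral.integral_hasDerivAt_right (hgC.intervalIntegrable 0 s)
      (hgC.aestronglyMeasurable.stronglyMeasurableAtFilter) hgC.continuousAt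
  set x : ℝ → ℝ := fun s => θhat s - θ with hx_def
  have hx' : ∀ s ≥ (0:ℝ), HasDerivAt x (-(g s) * x s) s := by
    intro s hs
    have h1 : HasDerivAt x (γ * e s * a s) s := (hθhat s hs).sub_const θ
    convert h1 using 1
    rw [he s, hg_def]
    simp only [hab_eq s hs, hκb_eq s hs, hx_def]
    ring
  -- v is constant
  have hv' : ∀ s ≥ (0:ℝ), HasDerivAt (fun u => x u * Real.exp (G u)) 0 s := by
    intro s hs
    have := (hx' s hs).fun_mul ((hG s).exp)
    refine this.congr_deriv ?_
    ring
  have hv_const : ∀ t ≥ (0:ℝ), x t * Real.exp (G t) = x 0 * Real.exp (G 0) := by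
    intro t ht
    exact constant_of_has_deriv_right_zero
      (fun s hs => ((hv' s hs.1).continuousAt.continuousWithinAt))
      (fun s hs => (hv' s hs.1).hasDerivWithinAt)
      t ⟨ht, le_rfl⟩
  have hG0 : G 0 = 0 := intervalIntegral.integral_same
  have hx_eq : ∀ t ≥ (0:ℝ), x t = x 0 * Real.exp (-(G t)) := by
    intro t ht
    have h := hv_const t ht
    rw [hG0, Real.exp_zero, mul_one] at h
    have hne : Real.exp (G t) ≠ 0 := Real.exp_ne_zero _
    rw [Real.exp_neg, eq_mul_inv_iff_mul_eq₀ hne]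
    exact h
  -- PE lower bound on integral of ab^2
  have hPEn : ∀ n : ℕ, (n : ℝ) * δ ≤ ∫ τ in (0:ℝ)..((n:ℝ) * L), (ab τ) ^ 2 := by
    intro n
    induction n with
    | zero => simp
    | succ n ih =>
      have hnL : (0:ℝ) ≤ (n:ℝ) * L := by positivity
      have hsplit : (∫ τ in (0:ℝ)..((n:ℝ) * L), (ab τ) ^ 2)
            + (∫ τ in ((n:ℝ) * L)..((n:ℝ) * L + L), (ab τ) ^ 2)
          = ∫ τ in (0:ℝ)..((n:ℝ) * L + L), (ab τ) ^ 2 :=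
        intervalIntegral.integral_add_adjacent_intervals
          ((habC.pow 2).intervalIntegrable _ _) ((habC.pow 2).intervalIntegrable _ _)
      have hcongr : (∫ τ in ((n:ℝ) * L)..((n:ℝ) * L + L), (ab τ) ^ 2)
          = ∫ τ in ((n:ℝ) * L)..((n:ℝ) * L + L), (a τ) ^ 2 := by
        apply intervalIntegral.integral_congr
        intro τ hτ
        have hτ0 : (0:ℝ) ≤ τ := by
          rcases hτ with ⟨h1, _⟩
          have : min ((n:ℝ) * L) ((n:ℝ) * L + L) = (n:ℝ) * L := by
            apply min_eq_left; linarith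
          rw [this] at h1; linarith
        simp [hab_eq τ hτ0]
      have hpe := hPE ((n:ℝ) * L) hnL
      have hcast : ((n + 1 : ℕ) : ℝ) * L = (n:ℝ) * L + L := by push_cast; ring
      rw [hcast]
      rw [← hsplit, hcongr]
      push_cast
      linarith
  have hGlb : ∀ t ≥ (0:ℝ), γ * D₁ * (δ * (t / L) - δ) ≤ G t := by
    intro t ht
    have h1 : γ * D₁ * ∫ τ in (0:ℝ)..t, (ab τ) ^ 2 ≤ G t := by
      rw [hG_def]
      rw [← intervalIntegral.integral_const_mul]
      apply intervalIntegral.integral_mono_on ht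
        ((continuous_const.mul (habC.pow 2)).intervalIntegrable _ _)
        (hgC.intervalIntegrable _ _)
      intro τ hτ
      have hκ1 : D₁ ≤ κb τ := (hκbd (max τ 0) (le_max_right _ _)).1
      have hsq : (0:ℝ) ≤ ab τ ^ 2 := sq_nonneg _
      show γ * D₁ * ab τ ^ 2 ≤ γ * (κb τ * ab τ ^ 2)
      have := mul_le_mul_of_nonneg_right hκ1 hsq
      nlinarith
    set n : ℕ := ⌊t / L⌋₊ with hn_def
    have hnle : (n:ℝ) * L ≤ t := by
      have := Nat.floor_le (by positivity : (0:ℝ) ≤ t / L)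
      rw [← hn_def] at this
      calc (n:ℝ) * L ≤ (t / L) * L := by nlinarith
        _ = t := by field_simp
    have hnge : t / L - 1 ≤ (n:ℝ) := by
      have := Nat.lt_floor_add_one (t / L)
      rw [← hn_def] at this
      linarith
    have h2 : (n:ℝ) * δ ≤ ∫ τ in (0:ℝ)..t, (ab τ) ^ 2 := by
      have hsplit : (∫ τ in (0:ℝ)..((n:ℝ) * L), (ab τ) ^ 2)
            + (∫ τ in ((n:ℝ) * L)..t, (ab τ) ^ 2)
          = ∫ τ in (0:ℝ)..t, (ab τ) ^ 2 :=
        intervalIntegral.integral_add_adjacent_intervals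
          ((habC.pow 2).intervalIntegrable _ _) ((habC.pow 2).intervalIntegrable _ _)
      have hnn : (0:ℝ) ≤ ∫ τ in ((n:ℝ) * L)..t, (ab τ) ^ 2 :=
        intervalIntegral.integral_nonneg hnle (fun τ _ => sq_nonneg _)
      have := hPEn n
      linarith
    have h3 : δ * (t / L) - δ ≤ (n:ℝ) * δ := by nlinarith
    calc γ * D₁ * (δ * (t / L) - δ) ≤ γ * D₁ * ((n:ℝ) * δ) :=
          mul_le_mul_of_nonneg_left h3 (by positivity)
      _ ≤ γ * D₁ * ∫ τ in (0:ℝ)..t, (ab τ) ^ 2 :=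
          mul_le_mul_of_nonneg_left h2 (by positivity)
      _ ≤ G t := h1
  -- part (i)
  have part1 : ∀ t ≥ (0:ℝ), |x t| ≤ Real.exp (γ * D₁ * δ) * Real.exp (-lam * t) * |x 0| := by
    intro t ht
    rw [hx_eq t ht, abs_mul, abs_of_pos (Real.exp_pos _)]
    rw [mul_comm (|x 0|)]
    apply mul_le_mul_of_nonneg_right _ (abs_nonneg _)
    rw [← Real.exp_add]
    apply Real.exp_le_exp.mpr
    have hLne : L ≠ 0 := ne_of_gt hL
    have : γ * D₁ * (δ * (t / L) - δ) = lam * t - γ * D₁ * δ := by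
      rw [hlam_def]; field_simp
    have h := hGlb t ht
    rw [this] at h
    linarith
  -- part (ii)
  set C : ℝ := D * M * Real.exp (γ * D₁ * δ) * |x 0| with hC_def
  have hC_nonneg : 0 ≤ C := by positivity
  have he_bd : ∀ s ≥ (0:ℝ), |e s| ≤ C * Real.exp (-lam * s) := by
    intro s hs
    rw [he s, abs_neg, abs_mul, abs_mul]
    have hκs := hκbd s hs
    have hκabs : |κ s| ≤ D := by rw [abs_of_pos (lt_of_lt_of_le hD₁ hκs.1)]; exact hκs.2
    have has : |a s| ≤ M := habd s hs
    have hxs := part1 s hs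
    calc |κ s| * |a s| * |θhat s - θ|
        ≤ D * M * (Real.exp (γ * D₁ * δ) * Real.exp (-lam * s) * |x 0|) := by
          apply mul_le_mul
          · exact mul_le_mul hκabs has (abs_nonneg _) hD.le
          · exact hxs
          · exact abs_nonneg _
          · positivity
      _ = C * Real.exp (-lam * s) := by rw [hC_def]; ring
  have hw' : ∀ s ≥ (0:ℝ),
      HasDerivAt (fun u => ψ u * Real.exp (K * u)) (e s * Real.exp (K * s)) s := by
    intro s hs
    have hexp : HasDerivAt (fun u => Real.exp (K * u)) (Real.exp (K * s) * K) s := by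
      have : HasDerivAt (fun u : ℝ => K * u) K s := by
        simpa using (hasDerivAt_id s).const_mul K
      simpa using this.exp
    have := (hψ s hs).fun_mul hexp
    refine this.congr_deriv ?_
    ring
  set B : ℝ → ℝ := fun s => |ψ 0| + (C / (K - lam)) * (Real.exp ((K - lam) * s) - 1)
    with hB_def
  have hB' : ∀ s : ℝ, HasDerivAt B (C * Real.exp ((K - lam) * s)) s := by
    intro s
    have h1 : HasDerivAt (fun u : ℝ => Real.exp ((K - lam) * u))
        (Real.exp ((K - lam) * s) * (K - lam)) s := by
      have : HasDerivAt (fun u : ℝ => (K - lam) * u) (K - lam) s := by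
        simpa using (hasDerivAt_id s).const_mul (K - lam)
      simpa using this.exp
    have h2 := ((h1.sub_const 1).const_mul (C / (K - lam))).const_add (|ψ 0|)
    refine h2.congr_deriv ?_
    field_simp
  have hwB : ∀ t ≥ (0:ℝ), |ψ t| * Real.exp (K * t) ≤ B t := by
    intro t ht
    have := image_norm_le_of_norm_deriv_right_le_deriv_boundary
      (f := fun u => ψ u * Real.exp (K * u)) (a := 0) (b := t)
      (f' := fun s => e s * Real.exp (K * s))
      (fun s hs => ((hw' s hs.1).continuousAt.continuousWithinAt))
      (fun s hs => (hw' s hs.1).hasDerivWithinAt)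
      (B := B) (B' := fun s => C * Real.exp ((K - lam) * s))
      ?ha hB' ?hbound ⟨ht, le_rfl⟩
    · simpa [Real.norm_eq_abs, abs_mul, abs_of_pos (Real.exp_pos (K * t))] using this
    · simp [hB_def, Real.norm_eq_abs, abs_mul, abs_of_pos (Real.exp_pos _)]
    · intro s hs
      rw [Real.norm_eq_abs, abs_mul, abs_of_pos (Real.exp_pos _)]
      calc |e s| * Real.exp (K * s)
          ≤ (C * Real.exp (-lam * s)) * Real.exp (K * s) := by
            apply mul_le_mul_of_nonneg_right (he_bd s hs.1) (Real.exp_pos _).le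
        _ = C * Real.exp ((K - lam) * s) := by rw [mul_assoc, ← Real.exp_add]; ring_nf
  intro t ht
  refine ⟨part1 t ht, ?_⟩
  have hwt := hwB t ht
  have hexpK : (0:ℝ) < Real.exp (K * t) := Real.exp_pos _
  have hψt : |ψ t| ≤ B t * Real.exp (-(K * t)) := by
    rw [Real.exp_neg, ← div_eq_mul_inv, le_div_iff₀ hexpK]
    exact hwt
  have hBle : B t * Real.exp (-(K * t))
      ≤ |ψ 0| * Real.exp (-K * t) + (C / (K - lam)) * Real.exp (-lam * t) := by
    rw [hB_def]
    have hkey : (Real.exp ((K - lam) * t) - 1) * Real.exp (-(K * t))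
        = Real.exp (-lam * t) - Real.exp (-(K * t)) := by
      rw [sub_mul, ← Real.exp_add, one_mul]
      ring_nf
    have hCg : 0 ≤ C / (K - lam) := div_nonneg hC_nonneg hKlam.le
    have hexpKt : (0:ℝ) < Real.exp (-(K * t)) := Real.exp_pos _
    have : (|ψ 0| + C / (K - lam) * (Real.exp ((K - lam) * t) - 1)) * Real.exp (-(K * t))
        = |ψ 0| * Real.exp (-(K * t))
          + C / (K - lam) * (Real.exp (-lam * t) - Real.exp (-(K * t))) := by
      rw [add_mul, mul_assoc, hkey]
    rw [this]
    have h2 : C / (K - lam) * (Real.exp (-lam * t) - Real.exp (-(K * t)))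
        ≤ C / (K - lam) * Real.exp (-lam * t) := by
      apply mul_le_mul_of_nonneg_left _ hCg
      linarith [hexpKt]
    have : -K * t = -(K * t) := by ring
    rw [this]
    linarith
  calc |ψ t| ≤ B t * Real.exp (-(K * t)) := hψt
    _ ≤ |ψ 0| * Real.exp (-K * t) + (C / (K - lam)) * Real.exp (-lam * t) := hBle
    _ = |ψ 0| * Real.exp (-K * t)
        + D * M * Real.exp (γ * D₁ * δ) * |θhat 0 - θ| / (K - lam) * Real.exp (-lam * t) := by
      rw [hC_def, hx_def]
end

section
/- Let β, τ > 0, θ₁ ∈ ℝ, c > 0, and let h : ℝ → ℝ satisfy (h(s) − h(s'))·(s − s') ≥ c·(s − s')² for all s, s' ∈ ℝ. Let ψ̂, θ̂_I : [0,∞) → ℝ be differentiable, define θ̂(t) := ψ̂(t) + θ̂_I(t), and assume for all t ≥ 0: ψ̂'(t) = −(β/τ)·ψ̂(t) + (h(θ₁) − h(θ̂(t))) and θ̂_I'(t) = (β/τ)·ψ̂(t). Then θ̂ is differentiable with θ̂'(t) = h(θ₁) − h(θ̂(t)) for all t ≥ 0, and |θ̂(t) − θ₁| ≤ e^{−ct}·|θ̂(0)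 − θ₁| for every t ≥ 0. -/
/-- pattern-recognition example: for the finite-form estimator
`θ̂ = ψ̂ + θ̂_I` with `ψ̂' = −(β/τ)ψ̂ + (h(θ₁) − h(θ̂))` and
`θ̂_I' = (β/τ)ψ̂`, where `h` is strongly monotone with constant `c`, the
estimate obeys `θ̂' = h(θ₁) − h(θ̂)` and converges exponentially:
`|θ̂(t) − θ₁| ≤ e^{−ct}·|θ̂(0) − θ₁|`. -/
theorem statement16 (β τ : ℝ) (hβ : 0 < β) (hτ : 0 < τ)
    (θ₁ : ℝ) (c : ℝ) (hc : 0 < c)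
    (h : ℝ → ℝ)
    (hmono : ∀ s s' : ℝ, c * (s - s') ^ 2 ≤ (h s - h s') * (s - s'))
    (ψhat θI : ℝ → ℝ)
    (θhat : ℝ → ℝ) (hθhat : ∀ t : ℝ, θhat t = ψhat t + θI t)
    (hψhat : ∀ t ≥ (0:ℝ),
      HasDerivAt ψhat (-(β / τ) * ψhat t + (h θ₁ - h (θhat t))) t)
    (hθI : ∀ t ≥ (0:ℝ), HasDerivAt θI ((β / τ) * ψhat t) t) :
    (∀ t ≥ (0:ℝ), HasDerivAt θhat (h θ₁ - h (θhat t)) t) ∧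
      ∀ t ≥ (0:ℝ), |θhat t - θ₁| ≤ Real.exp (-c * t) * |θhat 0 - θ₁| := by
  have heq : θhat = fun t => ψhat t + θI t := funext hθhat
  have hderiv : ∀ t ≥ (0:ℝ), HasDerivAt θhat (h θ₁ - h (θhat t)) t := by
    intro t ht
    have := (hψhat t ht).add (hθI t ht)
    rw [heq]
    exact this.congr_deriv (by rw [hθhat t]; ring)
  refine ⟨hderiv, ?_⟩
  -- Lyapunov function g t = (θhat t - θ₁)^2 * exp (2 c t)
  set g : ℝ → ℝ := fun t => (θhat t - θ₁) ^ 2 * Real.exp (2 * c * t) with hg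
  have hgderiv : ∀ t ≥ (0:ℝ), HasDerivAt g
      ((2 * (θhat t - θ₁) * (h θ₁ - h (θhat t)) + 2 * c * (θhat t - θ₁) ^ 2)
        * Real.exp (2 * c * t)) t := by
    intro t ht
    have h1 : HasDerivAt (fun t => (θhat t - θ₁) ^ 2)
        (2 * (θhat t - θ₁) * (h θ₁ - h (θhat t))) t := by
      have := ((hderiv t ht).sub_const θ₁).pow 2
      exact this.congr_deriv (by ring)
    have h2 : HasDerivAt (fun t => Real.exp (2 * c * t))
        (2 * c * Real.exp (2 * c * t)) t := by
      have := (Real.hasDerivAt_exp (2 * c * t)).comp t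
        ((hasDerivAt_id t).const_mul (2 * c))
      exact this.congr_deriv (by ring)
    have := h1.mul h2
    exact this.congr_deriv (by ring)
  have hgderiv_nonpos : ∀ t ≥ (0:ℝ),
      (2 * (θhat t - θ₁) * (h θ₁ - h (θhat t)) + 2 * c * (θhat t - θ₁) ^ 2)
        * Real.exp (2 * c * t) ≤ 0 := by
    intro t ht
    have hm := hmono θ₁ (θhat t)
    have key : 2 * (θhat t - θ₁) * (h θ₁ - h (θhat t)) + 2 * c * (θhat t - θ₁) ^ 2 ≤ 0 := by
      nlinarith [hm]
    exact mul_nonpos_of_nonpos_of_nonneg key (Real.exp_nonneg _)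
  have hanti : AntitoneOn g (Set.Ici (0:ℝ)) := by
    apply antitoneOn_of_hasDerivWithinAt_nonpos (convex_Ici 0)
      (f' := fun t => (2 * (θhat t - θ₁) * (h θ₁ - h (θhat t)) + 2 * c * (θhat t - θ₁) ^ 2)
        * Real.exp (2 * c * t))
    · exact fun t ht => (hgderiv t ht).continuousAt.continuousWithinAt
    · intro t ht
      rw [interior_Ici] at ht
      exact (hgderiv t (le_of_lt ht)).hasDerivWithinAt
    · intro t ht
      rw [interior_Ici] at ht
      exact hgderiv_nonpos t (le_of_lt ht)
  intro t ht
  have hle : g t ≤ g 0 := hanti Set.self_mem_Ici ht ht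
  simp only [hg, mul_zero, Real.exp_zero, mul_one] at hle
  have hsq : (θhat t - θ₁) ^ 2 ≤ (Real.exp (-c * t) * |θhat 0 - θ₁|) ^ 2 := by
    have hexp : (0:ℝ) < Real.exp (2 * c * t) := Real.exp_pos _
    have hkey : (Real.exp (-c * t) * |θhat 0 - θ₁|) ^ 2 * Real.exp (2 * c * t)
        = (θhat 0 - θ₁) ^ 2 := by
      rw [mul_pow, sq_abs, sq (Real.exp (-c * t)), mul_assoc, mul_comm ((θhat 0 - θ₁) ^ 2),
        ← mul_assoc, ← Real.exp_add, ← Real.exp_add,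
        show -c * t + -c * t + 2 * c * t = 0 by ring, Real.exp_zero, one_mul]
    nlinarith [hle, hexp]
  have h0 : (0:ℝ) ≤ Real.exp (-c * t) * |θhat 0 - θ₁| := by positivity
  calc |θhat t - θ₁| = Real.sqrt ((θhat t - θ₁) ^ 2) := (Real.sqrt_sq_eq_abs _).symm
    _ ≤ Real.sqrt ((Real.exp (-c * t) * |θhat 0 - θ₁|) ^ 2) := Real.sqrt_le_sqrt hsq
    _ = Real.exp (-c * t) * |θhat 0 - θ₁| := by rw [Real.sqrt_sq h0]
end
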